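/- arXiv:2303.11962 — 11 statements merged into one kernel-verified Lean document; each statement's English description precedes it below -/
import Mathlib

section
/- Let K be a Hermitian D×D complex matrix, let Π and Π₀ be orthogonal projectors, and let Γ > 0, Δ ≥ 0 and ε ≥ 0 be reals such that KΠ = ΠK, KΠ ≥ √Γ·Π in the Loewner order, ‖(I−Π)K(I−Π)‖ ≤ √Δ, and ‖Π − Π₀‖ ≤ ε. Let ρ be a density matrix with tr(Πρ) > 0 and let n be a natural number. Then tr(Kⁿ ρ Kⁿ) > 0, and the normalized matrix ρₙ := Kⁿ ρ Kⁿ / tr(Kⁿ ρ Kⁿ) satisfies tr(Π₀ ρₙ) ≥ 1 − ((1 − tr(Πρ))/tr(Πρ))·(Δ/Γ)ⁿ − ε. -/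
/-!
Write `ρₙ = Kⁿ ρ Kⁿ` and split its trace along `P` and `1 - P`, both of which commute with `K`.
On the range of `P` the gap condition gives `(KP)² ≥ Γ P`, so `tr(P ρₙ) ≥ Γⁿ tr(P ρ)`; on the range
of `1 - P` we have `‖K(1 - P)‖² ≤ Δ`, so `tr((1 - P) ρₙ) ≤ Δⁿ (1 - tr(P ρ))`. Both estimates are
proved one power at a time from `tr(M^(k+1) σ M^(k+1)) = tr(M² · M^k σ M^k)`, using that
`tr(X σ) ≥ 0` for positive semidefinite `X, σ`. After normalising, replacing `P` by `P₀` costs at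
most `‖P - P₀‖ ≤ ε`.
-/

open scoped Matrix.Norms.L2Operator ComplexOrder

namespace Matrix

variable {n R : Type*} [Fintype n]

theorem IsHermitian.posSemidef_of_isIdempotentElem [CommRing R] [PartialOrder R] [StarRing R]
    [StarOrderedRing R] {P : Matrix n n R} (hPherm : P.IsHermitian)
    (hP : IsIdempotentElem P) : P.PosSemidef := by
  have := posSemidef_conjTranspose_mul_self P
  rwa [hPherm.eq, hP.eq] at this

variable [DecidableEq n]

theorem trace_pow_succ_mul_mul_pow_succ [CommSemiring R] (M σ : Matrix n n R) (k : ℕ) :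
    (M ^ (k + 1) * σ * M ^ (k + 1)).trace = (M * M * (M ^ k * σ * M ^ k)).trace := by
  have hconj : M ^ (k + 1) * σ * M ^ (k + 1) = M * (M ^ k * σ * M ^ k) * M := by
    nth_rw 2 [pow_succ]
    rw [pow_succ']
    simp only [mul_assoc]
  rw [hconj, trace_mul_cycle]

theorem trace_proj_mul_pow_conj [CommSemiring R] {K P ρ : Matrix n n R} (hKP : Commute K P)
    (hP : IsIdempotentElem P) (k : ℕ) :
    (P * (K ^ k * ρ * K ^ k)).trace = ((K * P) ^ k * (P * ρ * P) * (K * P) ^ k).trace := by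
  have hKPk : (K * P) ^ k * P = K ^ k * P := by
    rw [hKP.mul_pow, mul_assoc, ← pow_succ, hP.pow_succ_eq]
  have hPKPk : P * (K * P) ^ k = P * K ^ k := by
    rw [hKP.mul_pow, ← mul_assoc, ← (hKP.pow_left k).eq, mul_assoc, ← pow_succ', hP.pow_succ_eq,
      (hKP.pow_left k).eq]
  calc (P * (K ^ k * ρ * K ^ k)).trace = (P * (K ^ k * ρ * K ^ k) * P).trace := by
        rw [trace_mul_cycle P _ P, hP.eq]
    _ = (P * K ^ k * ρ * (K ^ k * P)).trace := by simp only [mul_assoc]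
    _ = (K ^ k * P * ρ * (P * K ^ k)).trace := by rw [(hKP.pow_left k).eq]
    _ = ((K * P) ^ k * (P * ρ * P) * (K * P) ^ k).trace := by
        rw [← hKPk, ← hPKPk]
        simp only [mul_assoc]

theorem posSemidef_pow_mul_mul_pow [CommRing R] [PartialOrder R] [StarRing R]
    {M σ : Matrix n n R} (hM : M.IsHermitian) (hσ : σ.PosSemidef)
    (k : ℕ) : (M ^ k * σ * M ^ k).PosSemidef := by
  simpa only [(hM.pow k).eq] using hσ.mul_mul_conjTranspose_same (M ^ k)

open scoped MatrixOrder in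
theorem PosSemidef.re_trace_mul_nonneg {X σ : Matrix n n ℂ} (hX : X.PosSemidef)
    (hσ : σ.PosSemidef) : 0 ≤ (X * σ).trace.re := by
  set S := CFC.sqrt σ
  have hS : S.IsHermitian := (nonneg_iff_posSemidef.mp (CFC.sqrt_nonneg σ)).isHermitian
  have hSXS : (S * X * S).PosSemidef := by
    simpa only [hS.eq] using hX.conjTranspose_mul_mul_same S
  have htrace : (X * σ).trace = (S * X * S).trace := by
    rw [← CFC.sqrt_mul_sqrt_self σ hσ.nonneg, ← mul_assoc, trace_mul_comm, ← mul_assoc]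
  rw [htrace]
  exact (RCLike.nonneg_iff.mp hSXS.trace_nonneg).1

theorem re_trace_mul_le_of_posSemidef_sub {X Y σ : Matrix n n ℂ} (hXY : (Y - X).PosSemidef)
    (hσ : σ.PosSemidef) : (X * σ).trace.re ≤ (Y * σ).trace.re := by
  have := hXY.re_trace_mul_nonneg hσ
  rwa [sub_mul, trace_sub, Complex.sub_re, sub_nonneg] at this

open scoped MatrixOrder in
theorem IsHermitian.re_trace_mul_le_norm_mul {B σ : Matrix n n ℂ} (hB : B.IsHermitian)
    (hσ : σ.PosSemidef) : (B * σ).trace.re ≤ ‖B‖ * σ.trace.re := by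
  have hle : B ≤ algebraMap ℝ (Matrix n n ℂ) ‖B‖ := IsSelfAdjoint.le_algebraMap_norm_self hB
  calc (B * σ).trace.re ≤ (algebraMap ℝ (Matrix n n ℂ) ‖B‖ * σ).trace.re :=
        re_trace_mul_le_of_posSemidef_sub hle hσ
    _ = ‖B‖ * σ.trace.re := by
        rw [Algebra.algebraMap_eq_smul_one, smul_mul_assoc, one_mul, trace_smul]
        simp

theorem posSemidef_mul_self_sub_smul {M P : Matrix n n ℂ} {c : ℝ} (hc : 0 ≤ c)
    (hP : IsIdempotentElem P) (hMP : M * P = M) (hPM : P * M = M)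
    (h : (M - (c : ℂ) • P).PosSemidef) : (M * M - ((c ^ 2 : ℝ) : ℂ) • P).PosSemidef := by
  set C := M - (c : ℂ) • P
  have hCC : (C * C).PosSemidef := by
    simpa only [h.isHermitian.eq] using posSemidef_conjTranspose_mul_self C
  have hsum : M * M - ((c ^ 2 : ℝ) : ℂ) • P = C * C + (2 * c) • C := by
    simp only [C, sub_mul, mul_sub, smul_mul_assoc, mul_smul_comm, hMP, hPM, hP.eq]
    push_cast
    module
  rw [hsum]
  exact hCC.add (h.smul (by positivity))

theorem le_re_trace_pow_mul_mul_pow {M P σ : Matrix n n ℂ} {c : ℝ} (hc : 0 ≤ c)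
    (hM : M.IsHermitian) (hMP : Commute M P) (hPσ : P * σ = σ) (hσ : σ.PosSemidef)
    (hgrowth : (M * M - (c : ℂ) • P).PosSemidef) (k : ℕ) :
    c ^ k * σ.trace.re ≤ (M ^ k * σ * M ^ k).trace.re := by
  induction k with
  | zero => simp
  | succ k ih =>
    have hτ := posSemidef_pow_mul_mul_pow hM hσ k
    have hPτ : P * (M ^ k * σ * M ^ k) = M ^ k * σ * M ^ k := by
      rw [← mul_assoc, ← mul_assoc, ← (hMP.pow_left k).eq, mul_assoc _ P, hPσ]
    calc c ^ (k + 1) * σ.trace.re = c * (c ^ k * σ.trace.re) := by ring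
      _ ≤ c * (M ^ k * σ * M ^ k).trace.re := mul_le_mul_of_nonneg_left ih hc
      _ = (((c : ℂ) • P) * (M ^ k * σ * M ^ k)).trace.re := by
        rw [smul_mul_assoc, hPτ, trace_smul]; simp
      _ ≤ (M * M * (M ^ k * σ * M ^ k)).trace.re := re_trace_mul_le_of_posSemidef_sub hgrowth hτ
      _ = (M ^ (k + 1) * σ * M ^ (k + 1)).trace.re := by rw [trace_pow_succ_mul_mul_pow_succ]

theorem re_trace_pow_mul_mul_pow_le {M σ : Matrix n n ℂ} (hM : M.IsHermitian)
    (hσ : σ.PosSemidef) (k : ℕ) :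
    (M ^ k * σ * M ^ k).trace.re ≤ (‖M‖ ^ 2) ^ k * σ.trace.re := by
  induction k with
  | zero => simp
  | succ k ih =>
    have hτ := posSemidef_pow_mul_mul_pow hM hσ k
    have hMM_herm : (M * M).IsHermitian := by simpa only [sq] using hM.pow 2
    have hMM : ‖M * M‖ = ‖M‖ ^ 2 := by
      rw [sq, ← l2_opNorm_conjTranspose_mul_self, hM.eq]
    calc (M ^ (k + 1) * σ * M ^ (k + 1)).trace.re = (M * M * (M ^ k * σ * M ^ k)).trace.re := by
          rw [trace_pow_succ_mul_mul_pow_succ]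
      _ ≤ ‖M * M‖ * (M ^ k * σ * M ^ k).trace.re :=
          hMM_herm.re_trace_mul_le_norm_mul hτ
      _ ≤ ‖M‖ ^ 2 * ((‖M‖ ^ 2) ^ k * σ.trace.re) := by
          rw [hMM]; exact mul_le_mul_of_nonneg_left ih (by positivity)
      _ = (‖M‖ ^ 2) ^ (k + 1) * σ.trace.re := by ring

theorem IsHermitian.re_trace_mul_sub_norm_sub_mul_le {P P₀ σ : Matrix n n ℂ}
    (hP : P.IsHermitian) (hP₀ : P₀.IsHermitian) (hσ : σ.PosSemidef) :
    (P * σ).trace.re - ‖P - P₀‖ * σ.trace.re ≤ (P₀ * σ).trace.re := by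
  have := (hP.sub hP₀).re_trace_mul_le_norm_mul hσ
  rw [sub_mul, trace_sub, Complex.sub_re] at this
  linarith

theorem le_re_trace_proj_mul_pow_conj {K P ρ : Matrix n n ℂ} {Γ : ℝ} (hΓ : 0 ≤ Γ)
    (hK : K.IsHermitian) (hPherm : P.IsHermitian) (hP : IsIdempotentElem P) (hKP : Commute K P)
    (hgap : (K * P - (Real.sqrt Γ : ℂ) • P).PosSemidef) (hρ : ρ.PosSemidef) (k : ℕ) :
    Γ ^ k * (P * ρ).trace.re ≤ (P * (K ^ k * ρ * K ^ k)).trace.re := by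
  have hσ : (P * ρ * P).PosSemidef := by
    simpa only [hPherm.eq] using hρ.mul_mul_conjTranspose_same P
  have hPσ : P * (P * ρ * P) = P * ρ * P := by rw [← mul_assoc, ← mul_assoc, hP.eq]
  have htrσ : (P * ρ * P).trace = (P * ρ).trace := by rw [trace_mul_cycle, hP.eq]
  have hgrowth : (K * P * (K * P) - (Γ : ℂ) • P).PosSemidef := by
    simpa only [Real.sq_sqrt hΓ] using posSemidef_mul_self_sub_smul (Real.sqrt_nonneg Γ) hP
      (by rw [mul_assoc, hP.eq]) (by rw [← mul_assoc, ← hKP.eq, mul_assoc, hP.eq]) hgap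
  rw [trace_proj_mul_pow_conj hKP hP, ← htrσ]
  exact le_re_trace_pow_mul_mul_pow hΓ ((hK.commute_iff hPherm).mp hKP)
    (hKP.mul_left (Commute.refl P)) hPσ hσ hgrowth k

theorem re_trace_proj_mul_pow_conj_le {K P ρ : Matrix n n ℂ} (hK : K.IsHermitian)
    (hPherm : P.IsHermitian) (hP : IsIdempotentElem P) (hKP : Commute K P)
    (hρ : ρ.PosSemidef) (k : ℕ) :
    (P * (K ^ k * ρ * K ^ k)).trace.re ≤ (‖K * P‖ ^ 2) ^ k * (P * ρ).trace.re := by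
  have hσ : (P * ρ * P).PosSemidef := by
    simpa only [hPherm.eq] using hρ.mul_mul_conjTranspose_same P
  have htrσ : (P * ρ * P).trace = (P * ρ).trace := by rw [trace_mul_cycle, hP.eq]
  rw [trace_proj_mul_pow_conj hKP hP, ← htrσ]
  exact re_trace_pow_mul_mul_pow_le ((hK.commute_iff hPherm).mp hKP) hσ k

theorem re_trace_one_sub_proj_mul_pow_conj_le {K P ρ : Matrix n n ℂ} {Δ : ℝ} (hΔ : 0 ≤ Δ)
    (hK : K.IsHermitian) (hPherm : P.IsHermitian) (hP : IsIdempotentElem P) (hKP : Commute K P)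
    (hgap : ‖(1 - P) * K * (1 - P)‖ ≤ Real.sqrt Δ) (hρ : ρ.PosSemidef) (hρtr : ρ.trace = 1)
    (k : ℕ) :
    ((1 - P) * (K ^ k * ρ * K ^ k)).trace.re ≤ Δ ^ k * (1 - (P * ρ).trace.re) := by
  have hQherm : (1 - P).IsHermitian := isHermitian_one.sub hPherm
  have hKQ : Commute K (1 - P) := (Commute.one_right K).sub_right hKP
  have hnorm : ‖K * (1 - P)‖ ^ 2 ≤ Δ := by
    rw [← hKQ.eq, mul_assoc, hP.one_sub.eq] at hgap
    rw [← Real.sq_sqrt hΔ]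
    exact pow_le_pow_left₀ (norm_nonneg _) hgap 2
  have hQρ : ((1 - P) * ρ).trace.re = 1 - (P * ρ).trace.re := by
    rw [sub_mul, one_mul, trace_sub, Complex.sub_re, hρtr, Complex.one_re]
  have hQρ_nonneg : 0 ≤ ((1 - P) * ρ).trace.re :=
    (hQherm.posSemidef_of_isIdempotentElem hP.one_sub).re_trace_mul_nonneg hρ
  calc ((1 - P) * (K ^ k * ρ * K ^ k)).trace.re
      ≤ (‖K * (1 - P)‖ ^ 2) ^ k * ((1 - P) * ρ).trace.re :=
        re_trace_proj_mul_pow_conj_le hK hQherm hP.one_sub hKQ hρ k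
    _ ≤ Δ ^ k * (1 - (P * ρ).trace.re) := by
        rw [← hQρ]
        exact mul_le_mul_of_nonneg_right (pow_le_pow_left₀ (by positivity) hnorm k) hQρ_nonneg

end Matrix

open Matrix

theorem le_inv_add_mul_of_bounds {a b p f g x ε : ℝ} (ha : 0 < a) (hp : 0 < p)
    (hf : a * p ≤ f) (hg₀ : 0 ≤ g) (hg : g ≤ b * (1 - p)) (hx : f - ε * (f + g) ≤ x) :
    1 - (1 - p) / p * (b / a) - ε ≤ (f + g)⁻¹ * x := by
  have hap : 0 < a * p := mul_pos ha hp
  have hT : 0 < f + g := by linarith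
  have hgT : g / (f + g) ≤ (1 - p) / p * (b / a) :=
    calc g / (f + g) ≤ g / (a * p) := div_le_div_of_nonneg_left hg₀ hap (by linarith)
      _ ≤ b * (1 - p) / (a * p) := div_le_div_of_nonneg_right hg hap.le
      _ = (1 - p) / p * (b / a) := by field_simp
  calc 1 - (1 - p) / p * (b / a) - ε ≤ 1 - g / (f + g) - ε := by linarith
    _ = (f + g)⁻¹ * (f - ε * (f + g)) := by field_simp; ring
    _ ≤ (f + g)⁻¹ * x := mul_le_mul_of_nonneg_left hx (inv_nonneg.mpr hT.le)

theorem stmt0_general (D : ℕ)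
    (K P P₀ ρ : Matrix (Fin D) (Fin D) ℂ)
    (Γ Δ ε : ℝ) (hΓ : 0 < Γ) (hΔ : 0 ≤ Δ)
    (hK : K.IsHermitian)
    (hPherm : P.IsHermitian) (hPproj : P * P = P)
    (hP₀herm : P₀.IsHermitian)
    (hcomm : K * P = P * K)
    (hGamma : (K * P - (Real.sqrt Γ : ℂ) • P).PosSemidef)
    (hDelta : ‖(1 - P) * K * (1 - P)‖ ≤ Real.sqrt Δ)
    (hPP₀ : ‖P - P₀‖ ≤ ε)
    (hρ : ρ.PosSemidef) (hρtr : ρ.trace = 1)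
    (hover : 0 < (P * ρ).trace.re) (n : ℕ) :
    0 < (K ^ n * ρ * K ^ n).trace.re ∧
      1 - (1 - (P * ρ).trace.re) / (P * ρ).trace.re * (Δ / Γ) ^ n - ε ≤
        (P₀ * (((K ^ n * ρ * K ^ n).trace.re)⁻¹ • (K ^ n * ρ * K ^ n))).trace.re := by
  set ρₙ := K ^ n * ρ * K ^ n
  have hρₙ : ρₙ.PosSemidef := posSemidef_pow_mul_mul_pow hK hρ n
  have hsplit : ρₙ.trace.re = (P * ρₙ).trace.re + ((1 - P) * ρₙ).trace.re := by
    rw [sub_mul, one_mul, trace_sub, Complex.sub_re]; ring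
  have hf : Γ ^ n * (P * ρ).trace.re ≤ (P * ρₙ).trace.re :=
    le_re_trace_proj_mul_pow_conj hΓ.le hK hPherm hPproj hcomm hGamma hρ n
  have hg : ((1 - P) * ρₙ).trace.re ≤ Δ ^ n * (1 - (P * ρ).trace.re) :=
    re_trace_one_sub_proj_mul_pow_conj_le hΔ hK hPherm hPproj hcomm hDelta hρ hρtr n
  have hg₀ : 0 ≤ ((1 - P) * ρₙ).trace.re :=
    ((isHermitian_one.sub hPherm).posSemidef_of_isIdempotentElem
      (IsIdempotentElem.one_sub hPproj)).re_trace_mul_nonneg hρₙ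
  have hpos : 0 < ρₙ.trace.re := by
    rw [hsplit]; linarith [mul_pos (pow_pos hΓ n) hover]
  have hP₀ : (P * ρₙ).trace.re - ε * ρₙ.trace.re ≤ (P₀ * ρₙ).trace.re := by
    linarith [hPherm.re_trace_mul_sub_norm_sub_mul_le hP₀herm hρₙ,
      mul_le_mul_of_nonneg_right hPP₀ hpos.le]
  refine ⟨hpos, ?_⟩
  rw [mul_smul_comm, trace_smul, Complex.real_smul, Complex.re_ofReal_mul, hsplit, div_pow]
  exact le_inv_add_mul_of_bounds (pow_pos hΓ n) hover hf hg₀ hg (hsplit ▸ hP₀)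

/-- Overlap bound for the stopped process after `n` successful weak measurements of an AGSP. -/
theorem stmt0 (D : ℕ) (hD : 1 ≤ D)
    (K P P₀ ρ : Matrix (Fin D) (Fin D) ℂ)
    (Γ Δ ε : ℝ) (hΓ : 0 < Γ) (hΔ : 0 ≤ Δ) (hε : 0 ≤ ε)
    (hK : K.IsHermitian)
    (hPherm : P.IsHermitian) (hPproj : P * P = P)
    (hP₀herm : P₀.IsHermitian) (hP₀proj : P₀ * P₀ = P₀)
    (hcomm : K * P = P * K)
    (hGamma : (K * P - (Real.sqrt Γ : ℂ) • P).PosSemidef)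
    (hDelta : ‖(1 - P) * K * (1 - P)‖ ≤ Real.sqrt Δ)
    (hPP₀ : ‖P - P₀‖ ≤ ε)
    (hρ : ρ.PosSemidef) (hρtr : ρ.trace = 1)
    (hover : 0 < (P * ρ).trace.re) (n : ℕ) :
    0 < (K ^ n * ρ * K ^ n).trace.re ∧
      1 - (1 - (P * ρ).trace.re) / (P * ρ).trace.re * (Δ / Γ) ^ n - ε ≤
        (P₀ * (((K ^ n * ρ * K ^ n).trace.re)⁻¹ • (K ^ n * ρ * K ^ n))).trace.re :=
  stmt0_general D K P P₀ ρ Γ Δ ε hΓ hΔ hK hPherm hPproj hP₀herm hcomm hGamma hDelta hPP₀ hρ hρtr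
    hover n
end

section
/- Let K be a Hermitian D×D complex matrix, let Π and Π₀ be orthogonal projectors with N := tr Π > 0, and let Γ > 0, Δ ≥ 0 and ε ≥ 0 be reals such that KΠ = ΠK, KΠ ≥ √Γ·Π in the Loewner order, ‖(I−Π)K(I−Π)‖ ≤ √Δ, and ‖Π − Π₀‖ ≤ ε. Then for every natural number n, tr(K^{2n}) > 0 and tr(Π₀ · K^{2n}/tr(K^{2n})) ≥ 1 − ε − (D/N)·(Δ/Γ)ⁿ. (The matrix K^{2n}/tr(K^{2n}) is the state obtained after n successful measurements starting from the maximally mixed state I/D.) -/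
open scoped Matrix.Norms.L2Operator ComplexOrder MatrixOrder

/-!
Since `K` commutes with `P`, the weight `tr K^(2n)` splits into the part inside `P` and the
part inside `1 - P`. From `√Γ P ≤ K P`, where both sides commute, we get `Γⁿ P ≤ (K P)^(2n)`,
so the inside part is at least `Γⁿ N`; the compression of `K` to `1 - P` has norm at most `√Δ`,
so the outside part is at most `Δⁿ D`. The normalised state therefore has weight at least
`1 - (D / N) (Δ / Γ)ⁿ` in `P`, and trading `P` for `P₀` costs at most `‖P - P₀‖ ≤ ε`.
-/

section CStarAlgebra

variable {A : Type*} [CStarAlgebra A] [PartialOrder A] [StarOrderedRing A] {a b : A}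

theorem pow_le_pow_left_of_commute (ha : 0 ≤ a) (hab : a ≤ b) (h : Commute a b) :
    ∀ n : ℕ, a ^ n ≤ b ^ n
  | 0 => by rw [pow_zero, pow_zero]
  | n + 1 => by
    have ih := pow_le_pow_left_of_commute ha hab h n
    have hbn : 0 ≤ b ^ n := CStarAlgebra.pow_nonneg (ha.trans hab) n
    calc a ^ (n + 1) = a ^ n * a := pow_succ a n
      _ ≤ b ^ n * a := by
        rw [← sub_nonneg, ← sub_mul]
        exact ((h.pow_right n).sub_right (Commute.self_pow a n)).symm.mul_nonneg
          (sub_nonneg.mpr ih) ha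
      _ ≤ b ^ n * b := by
        rw [← sub_nonneg, ← mul_sub]
        exact ((Commute.pow_self b n).sub_right (h.symm.pow_left n)).mul_nonneg hbn
          (sub_nonneg.mpr hab)
      _ = b ^ (n + 1) := (pow_succ b n).symm

theorem IsSelfAdjoint.pow_two_mul_le_algebraMap_norm (ha : IsSelfAdjoint a) (n : ℕ) :
    a ^ (2 * n) ≤ algebraMap ℝ A (‖a‖ ^ (2 * n)) := by
  have hsq : a ^ 2 ≤ algebraMap ℝ A (‖a‖ ^ 2) := by
    simpa only [ha.star_eq, sq] using CStarAlgebra.star_mul_le_algebraMap_norm_sq (a := a)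
  simpa only [pow_mul, map_pow] using
    pow_le_pow_left_of_commute ha.sq_nonneg hsq (Algebra.commutes _ _).symm n

end CStarAlgebra

theorem IsIdempotentElem.mul_pow_mul_self {M : Type*} [Monoid M] {e k : M}
    (he : IsIdempotentElem e) (hke : Commute k e) (m : ℕ) : (k * e) ^ m * e = k ^ m * e := by
  rw [hke.mul_pow, mul_assoc, ← pow_succ, he.pow_succ_eq]

namespace Matrix

variable {ι : Type*} [Fintype ι] {X Y S : Matrix ι ι ℂ}

theorem re_trace_le_re_trace (h : X ≤ Y) : X.trace.re ≤ Y.trace.re :=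
  Complex.re_le_re (OrderHomClass.mono (tracePositiveLinearMap ι ℝ ℂ) h)

variable [DecidableEq ι]

theorem re_trace_mul_le_re_trace_mul (h : X ≤ Y) (hS : 0 ≤ S) :
    (X * S).trace.re ≤ (Y * S).trace.re := by
  obtain ⟨B, rfl⟩ := CStarAlgebra.nonneg_iff_eq_star_mul_self.mp hS
  simpa only [← mul_assoc, trace_mul_cycle _ _ B] using
    re_trace_le_re_trace (star_right_conjugate_le_conjugate h B)

theorem re_trace_mul_nonneg (hX : 0 ≤ X) (hS : 0 ≤ S) : 0 ≤ (X * S).trace.re := by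
  simpa using re_trace_mul_le_re_trace_mul hX hS

theorem re_trace_algebraMap_mul (r : ℝ) (S : Matrix ι ι ℂ) :
    (algebraMap ℝ (Matrix ι ι ℂ) r * S).trace.re = r * S.trace.re := by
  simp [Algebra.algebraMap_eq_smul_one]

theorem re_trace_mul_le_norm_mul (hX : IsSelfAdjoint X) (hS : 0 ≤ S) :
    (X * S).trace.re ≤ ‖X‖ * S.trace.re := by
  simpa only [re_trace_algebraMap_mul] using
    re_trace_mul_le_re_trace_mul hX.le_algebraMap_norm_self hS

theorem pow_mul_re_trace_le_re_trace_mul_pow {K E : Matrix ι ι ℂ} (hE : IsStarProjection E)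
    (hKE : Commute K E) {c : ℝ} (hc : 0 ≤ c) (hle : (c : ℂ) • E ≤ K * E) (m : ℕ) :
    c ^ m * E.trace.re ≤ (E * K ^ m).trace.re := by
  have hcE : 0 ≤ (c : ℂ) • E :=
    ((nonneg_iff_posSemidef.mp hE.nonneg).smul (Complex.zero_le_real.mpr hc)).nonneg
  have hpow := pow_le_pow_left_of_commute hcE hle
    ((hKE.symm.mul_right (Commute.refl E)).smul_left (c : ℂ)) m
  have htr := re_trace_mul_le_re_trace_mul hpow hE.nonneg
  rwa [smul_pow, smul_mul_assoc, ← pow_succ, hE.pow_succ_eq, trace_smul, smul_eq_mul,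
    ← Complex.ofReal_pow, Complex.re_ofReal_mul, hE.isIdempotentElem.mul_pow_mul_self hKE,
    trace_mul_comm] at htr

theorem re_trace_mul_pow_two_mul_le {K E : Matrix ι ι ℂ} (hK : IsSelfAdjoint K)
    (hE : IsStarProjection E) (hKE : Commute K E) {r : ℝ} (hr : ‖E * K * E‖ ≤ r) (n : ℕ) :
    (E * K ^ (2 * n)).trace.re ≤ r ^ (2 * n) * E.trace.re := by
  have hKE' : IsSelfAdjoint (K * E) := (hK.commute_iff hE.isSelfAdjoint).mp hKE
  have hnorm : ‖K * E‖ ≤ r := by rwa [← hKE.eq, mul_assoc, hE.isIdempotentElem.eq] at hr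
  have htrE : 0 ≤ E.trace.re := by simpa using re_trace_le_re_trace hE.nonneg
  have htr := re_trace_mul_le_re_trace_mul (hKE'.pow_two_mul_le_algebraMap_norm n) hE.nonneg
  rw [re_trace_algebraMap_mul, hE.isIdempotentElem.mul_pow_mul_self hKE, trace_mul_comm] at htr
  exact htr.trans (by gcongr)

theorem re_trace_eq_re_trace_mul_add_re_trace_one_sub_mul (P S : Matrix ι ι ℂ) :
    S.trace.re = (P * S).trace.re + ((1 - P) * S).trace.re := by
  simp [sub_mul, trace_sub]

theorem one_sub_sub_le_re_trace_mul_inv_smul {P P₀ S : Matrix ι ι ℂ} (hP : IsStarProjection P)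
    (hP₀ : IsSelfAdjoint P₀) (hS : 0 ≤ S) {ε r : ℝ} (hPP₀ : ‖P - P₀‖ ≤ ε) (hr : 0 ≤ r)
    (hPS : 0 < (P * S).trace.re) (hleak : ((1 - P) * S).trace.re ≤ r * (P * S).trace.re) :
    1 - ε - r ≤ (P₀ * (S.trace.re⁻¹ • S)).trace.re := by
  have hsplit := re_trace_eq_re_trace_mul_add_re_trace_one_sub_mul P S
  have hQS : 0 ≤ ((1 - P) * S).trace.re := re_trace_mul_nonneg hP.one_sub.nonneg hS
  have hoverlap : ((P - P₀) * S).trace.re ≤ ε * S.trace.re :=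
    (re_trace_mul_le_norm_mul (hP.isSelfAdjoint.sub hP₀) hS).trans
      (mul_le_mul_of_nonneg_right hPP₀ (by linarith))
  have hstate : (P₀ * (S.trace.re⁻¹ • S)).trace.re =
      ((P * S).trace.re - ((P - P₀) * S).trace.re) / S.trace.re := by
    rw [Matrix.mul_smul, trace_smul, Complex.real_smul, Complex.re_ofReal_mul, inv_mul_eq_div]
    simp [sub_mul, trace_sub]
  rw [hstate, le_div_iff₀ (by linarith)]
  nlinarith [mul_nonneg hr hQS]

end Matrix

theorem stmt1_general (D : ℕ)
    (K P P₀ : Matrix (Fin D) (Fin D) ℂ)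
    (Γ Δ ε : ℝ) (hΓ : 0 < Γ) (hΔ : 0 ≤ Δ)
    (hK : K.IsHermitian)
    (hPherm : P.IsHermitian) (hPproj : P * P = P)
    (hP₀herm : P₀.IsHermitian)
    (hN : 0 < P.trace.re)
    (hcomm : K * P = P * K)
    (hGamma : (K * P - (Real.sqrt Γ : ℂ) • P).PosSemidef)
    (hDelta : ‖(1 - P) * K * (1 - P)‖ ≤ Real.sqrt Δ)
    (hPP₀ : ‖P - P₀‖ ≤ ε)
    (n : ℕ) :
    0 < (K ^ (2 * n)).trace.re ∧
      1 - ε - (D / P.trace.re) * (Δ / Γ) ^ n ≤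
        (P₀ * (((K ^ (2 * n)).trace.re)⁻¹ • K ^ (2 * n))).trace.re := by
  have hS : 0 ≤ K ^ (2 * n) := pow_mul' K 2 n ▸ IsSelfAdjoint.sq_nonneg (hK.pow n)
  have hP : IsStarProjection P := ⟨hPproj, hPherm⟩
  have hPS : Γ ^ n * P.trace.re ≤ (P * K ^ (2 * n)).trace.re := by
    simpa only [pow_mul, Real.sq_sqrt hΓ.le] using
      Matrix.pow_mul_re_trace_le_re_trace_mul_pow hP hcomm (Real.sqrt_nonneg Γ) hGamma (2 * n)
  have hQS : ((1 - P) * K ^ (2 * n)).trace.re ≤ Δ ^ n * (1 - P).trace.re := by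
    simpa only [pow_mul, Real.sq_sqrt hΔ] using
      Matrix.re_trace_mul_pow_two_mul_le hK hP.one_sub ((Commute.one_right K).sub_right hcomm)
        hDelta n
  have hPS_pos : 0 < (P * K ^ (2 * n)).trace.re := (mul_pos (pow_pos hΓ n) hN).trans_le hPS
  have hleak : ((1 - P) * K ^ (2 * n)).trace.re ≤
      D / P.trace.re * (Δ / Γ) ^ n * (P * K ^ (2 * n)).trace.re :=
    calc _ ≤ Δ ^ n * (1 - P).trace.re := hQS
      _ ≤ Δ ^ n * D := by gcongr; simpa [Matrix.trace_sub] using hN.le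
      _ = D / P.trace.re * (Δ / Γ) ^ n * (Γ ^ n * P.trace.re) := by rw [div_pow]; field_simp
      _ ≤ _ := by gcongr
  refine ⟨?_, Matrix.one_sub_sub_le_re_trace_mul_inv_smul hP hP₀herm hS hPP₀ (by positivity)
    hPS_pos hleak⟩
  rw [Matrix.re_trace_eq_re_trace_mul_add_re_trace_one_sub_mul P]
  linarith [Matrix.re_trace_mul_nonneg hP.one_sub.nonneg hS]

/-- Overlap bound for the state `K^(2n)/tr(K^(2n))` obtained after `n` successful measurements
starting from the maximally mixed state. -/
theorem stmt1 (D : ℕ) (hD : 1 ≤ D)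
    (K P P₀ : Matrix (Fin D) (Fin D) ℂ)
    (Γ Δ ε : ℝ) (hΓ : 0 < Γ) (hΔ : 0 ≤ Δ) (hε : 0 ≤ ε)
    (hK : K.IsHermitian)
    (hPherm : P.IsHermitian) (hPproj : P * P = P)
    (hP₀herm : P₀.IsHermitian) (hP₀proj : P₀ * P₀ = P₀)
    (hN : 0 < P.trace.re)
    (hcomm : K * P = P * K)
    (hGamma : (K * P - (Real.sqrt Γ : ℂ) • P).PosSemidef)
    (hDelta : ‖(1 - P) * K * (1 - P)‖ ≤ Real.sqrt Δ)
    (hPP₀ : ‖P - P₀‖ ≤ ε)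
    (n : ℕ) :
    0 < (K ^ (2 * n)).trace.re ∧
      1 - ε - (D / P.trace.re) * (Δ / Γ) ^ n ≤
        (P₀ * (((K ^ (2 * n)).trace.re)⁻¹ • K ^ (2 * n))).trace.re :=
  stmt1_general D K P P₀ Γ Δ ε hΓ hΔ hK hPherm hPproj hP₀herm hN hcomm hGamma hDelta hPP₀ n
end

section
/- Let K be a Hermitian D×D complex matrix, let Π and Π₀ be orthogonal projectors with N := tr Π > 0, and let reals Γ, Δ, ε with 0 < Δ < Γ and ε ≥ 0 satisfy KΠ = ΠK, KΠ ≥ √Γ·Π in the Loewner order, ‖(I−Π)K(I−Π)‖ ≤ √Δ, and ‖Π − Π₀‖ ≤ ε. Then for every η with 0 < η < 1 and every natural number n with n ≥ log(D/(N·η)) / log(Γ/Δ), one has tr(Π₀ · K^{2n}/tr(K^{2n})) ≥ 1 − ε − η. Hence a circuit depth of n = O(log(D/(Nη))/log(Γ/Δ)) suffices to reach ground-space overlap 1 − ε − η. -/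
open scoped Matrix.Norms.L2Operator ComplexOrder

/-!
Since `K` commutes with the projector `P`, `tr K^{2n} = tr (K^{2n} P) + tr (K^{2n} (1 - P))`.
On the range of `P` we have `K ≥ √Γ`, which gives `K^{2n} P ≥ Γ^n P` by induction through
`K^{2n+2} P - Γ^{n+1} P = K (K^{2n} P - Γ^n P) K + Γ^n (C² + 2√Γ C)` with `C = K P - √Γ P ≥ 0`,
so the first trace is at least `Γ^n N`. On the complement `K^{2n} (1 - P)` is the `2n`-th power
of `(1 - P) K (1 - P)` times `1 - P`, so the second trace is at most `D Δ^n`. Both this bound and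
the replacement of `P` by `P₀` rest on `|tr (H A)| ≤ ‖H‖ tr A` for `A ≥ 0`. Hence the overlap is
at least `1 - ε - (D / N) (Δ / Γ)^n`, and the choice of `n` makes `(D / N) (Δ / Γ)^n ≤ η`.
-/

theorem IsIdempotentElem.mul_mul_pow_mul_of_commute {M : Type*} [Monoid M] {k p : M}
    (hp : IsIdempotentElem p) (hkp : Commute k p) (m : ℕ) : (p * k * p) ^ m * p = k ^ m * p := by
  rw [← hkp.eq, mul_assoc, hp.eq, hkp.mul_pow, mul_assoc, ← pow_succ, hp.pow_succ_eq]

theorem Real.le_pow_of_log_div_log_le {x y : ℝ} {n : ℕ} (hx : 0 < x) (hy : 1 < y)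
    (h : Real.log x / Real.log y ≤ n) : x ≤ y ^ n := by
  rw [div_le_iff₀ (Real.log_pos hy), ← Real.log_pow] at h
  exact (Real.log_le_log_iff hx (by positivity)).mp h

lemma one_sub_sub_div_le_sub_div_add {t s r ε : ℝ} (ht : 0 < t) (hs : 0 ≤ s)
    (hr : r ≤ ε * (t + s)) : 1 - ε - s / t ≤ (t - r) / (t + s) := by
  rw [le_div_iff₀ (by linarith)]
  have h : s / t * t = s := div_mul_cancel₀ s ht.ne'
  nlinarith [div_nonneg hs ht.le]

namespace Matrix

variable {𝕜 ι : Type*} [RCLike 𝕜] [Fintype ι]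

open WithLp

lemma PosSemidef.re_trace_nonneg {A : Matrix ι ι 𝕜} (hA : A.PosSemidef) :
    0 ≤ RCLike.re A.trace :=
  (RCLike.nonneg_iff.mp hA.trace_nonneg).1

lemma conjTranspose_mul_mul_apply_same (H M : Matrix ι ι 𝕜) (i : ι) :
    (Mᴴ * H * M) i i = inner 𝕜 (toLp 2 (fun j => M j i) : EuclideanSpace 𝕜 ι)
      (toLp 2 (H *ᵥ fun j => M j i)) := by
  simp only [mul_apply, conjTranspose_apply, EuclideanSpace.inner_eq_star_dotProduct, dotProduct,
    mulVec, Finset.sum_mul, Pi.star_apply]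
  rw [Finset.sum_comm]
  simp [mul_comm, mul_left_comm, mul_assoc]

variable [DecidableEq ι]

lemma re_conjTranspose_mul_apply_same (M : Matrix ι ι 𝕜) (i : ι) :
    RCLike.re ((Mᴴ * M) i i) = ‖(toLp 2 (fun j => M j i) : EuclideanSpace 𝕜 ι)‖ ^ 2 := by
  rw [← Matrix.mul_one Mᴴ, conjTranspose_mul_mul_apply_same, one_mulVec]
  exact inner_self_eq_norm_sq _

lemma abs_re_conjTranspose_mul_mul_apply_same_le (H M : Matrix ι ι 𝕜) (i : ι) :
    |RCLike.re ((Mᴴ * H * M) i i)| ≤ ‖H‖ * RCLike.re ((Mᴴ * M) i i) := by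
  set c : EuclideanSpace 𝕜 ι := toLp 2 (fun j => M j i)
  rw [conjTranspose_mul_mul_apply_same, re_conjTranspose_mul_apply_same]
  calc _ ≤ ‖inner 𝕜 c (toLp 2 (H *ᵥ ofLp c))‖ := RCLike.abs_re_le_norm _
    _ ≤ ‖c‖ * (‖H‖ * ‖c‖) := (norm_inner_le_norm _ _).trans <| by
        gcongr; exact H.l2_opNorm_mulVec c
    _ = _ := by ring

open scoped MatrixOrder in
lemma abs_re_trace_mul_le {A : Matrix ι ι 𝕜} (hA : A.PosSemidef) (H : Matrix ι ι 𝕜) :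
    |RCLike.re (H * A).trace| ≤ ‖H‖ * RCLike.re A.trace := by
  obtain ⟨B, rfl⟩ := CStarAlgebra.nonneg_iff_eq_star_mul_self.mp hA.nonneg
  have hB : star B * B = Bᴴ * Bᴴᴴ := by rw [conjTranspose_conjTranspose, star_eq_conjTranspose]
  rw [hB, trace_mul_cycle', ← Matrix.mul_assoc, trace_mul_comm Bᴴ, trace, trace, map_sum, map_sum,
    Finset.mul_sum]
  exact (Finset.abs_sum_le_sum_abs _ _).trans <|
    Finset.sum_le_sum fun i _ => abs_re_conjTranspose_mul_mul_apply_same_le H Bᴴ i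

lemma l2_opNorm_pow_le (A : Matrix ι ι 𝕜) (n : ℕ) : ‖A ^ n‖ ≤ ‖A‖ ^ n := by
  rcases n with _ | n
  · rw [pow_zero, pow_zero, ← l2_opNorm_toEuclideanCLM, map_one]
    exact ContinuousLinearMap.norm_id_le
  · exact norm_pow_le' A n.succ_pos

variable {K P Q : Matrix ι ι 𝕜}

lemma posSemidef_pow_two_mul_mul (hK : K.IsHermitian) (hQ : Q.PosSemidef) (hKQ : Commute K Q)
    (n : ℕ) : (K ^ (2 * n) * Q).PosSemidef := by
  have h : K ^ (2 * n) * Q = (K ^ n)ᴴ * Q * K ^ n := by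
    rw [(hK.pow n).eq, Matrix.mul_assoc, ← (hKQ.pow_left n).eq, ← Matrix.mul_assoc, ← pow_add,
      two_mul]
  rw [h]
  exact hQ.conjTranspose_mul_mul_same _

lemma posSemidef_pow_two_mul_mul_sub {a : 𝕜} (ha : 0 ≤ a) (hK : K.IsHermitian)
    (hP : IsIdempotentElem P) (hKP : Commute K P) (hKPa : (K * P - a • P).PosSemidef) (n : ℕ) :
    (K ^ (2 * n) * P - a ^ (2 * n) • P).PosSemidef := by
  have hPK (X : Matrix ι ι 𝕜) : P * (K * X) = K * (P * X) := by
    rw [← Matrix.mul_assoc, ← hKP.eq, Matrix.mul_assoc]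
  induction n with
  | zero => simpa using PosSemidef.zero
  | succ n ih =>
    set C := K * P - a • P
    have hC : Cᴴ * C + (2 * a) • C = K * K * P - a ^ 2 • P := by
      rw [hKPa.isHermitian.eq]
      simp only [C, sub_mul, mul_sub, smul_mul_assoc, mul_smul_comm, smul_sub, Matrix.mul_assoc,
        hPK, hP.eq, smul_smul]
      module
    have key : K ^ (2 * (n + 1)) * P - a ^ (2 * (n + 1)) • P
        = Kᴴ * (K ^ (2 * n) * P - a ^ (2 * n) • P) * K + a ^ (2 * n) • (Cᴴ * C + (2 * a) • C) := by
      rw [hC, hK.eq, show 2 * (n + 1) = 1 + 2 * n + 1 by ring, pow_add, pow_add, pow_one]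
      simp only [sub_mul, mul_sub, smul_mul_assoc, mul_smul_comm, smul_sub, Matrix.mul_assoc,
        ← hKP.eq, smul_smul]
      module
    rw [key]
    exact (ih.conjTranspose_mul_mul_same K).add <|
      ((posSemidef_conjTranspose_mul_self C).add (hKPa.smul (mul_nonneg zero_le_two ha))).smul
        (pow_nonneg ha _)

lemma pow_mul_re_trace_le_re_trace_pow_two_mul_mul {a : ℝ} (ha : 0 ≤ a) (hK : K.IsHermitian)
    (hP : IsIdempotentElem P) (hKP : Commute K P) (hKPa : (K * P - (a : 𝕜) • P).PosSemidef)
    (n : ℕ) : a ^ (2 * n) * RCLike.re P.trace ≤ RCLike.re (K ^ (2 * n) * P).trace := by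
  have h := (posSemidef_pow_two_mul_mul_sub (RCLike.ofReal_nonneg.mpr ha) hK hP hKP hKPa n)
  rw [← RCLike.ofReal_pow] at h
  have h' := h.re_trace_nonneg
  rw [trace_sub, trace_smul, smul_eq_mul, map_sub, RCLike.re_ofReal_mul] at h'
  linarith

lemma re_trace_pow_mul_le (hQ : Q.PosSemidef) (hQidem : IsIdempotentElem Q) (hKQ : Commute K Q)
    (m : ℕ) : RCLike.re (K ^ m * Q).trace ≤ ‖Q * K * Q‖ ^ m * RCLike.re Q.trace := calc
  _ = RCLike.re ((Q * K * Q) ^ m * Q).trace := by rw [hQidem.mul_mul_pow_mul_of_commute hKQ]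
  _ ≤ ‖(Q * K * Q) ^ m‖ * RCLike.re Q.trace := le_of_abs_le (abs_re_trace_mul_le hQ _)
  _ ≤ _ := by
    gcongr
    · exact hQ.re_trace_nonneg
    · exact l2_opNorm_pow_le _ _

theorem one_sub_sub_le_re_trace_mul_pow_div {P₀ : Matrix ι ι 𝕜} {a b ε : ℝ} (ha : 0 < a)
    (hK : K.IsHermitian) (hP : IsStarProjection P) (hKP : Commute K P)
    (hN : 0 < RCLike.re P.trace) (hKPa : (K * P - (a : 𝕜) • P).PosSemidef)
    (hKQb : ‖(1 - P) * K * (1 - P)‖ ≤ b) (hPP₀ : ‖P - P₀‖ ≤ ε) (n : ℕ) :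
    1 - ε - Fintype.card ι * b ^ (2 * n) / (RCLike.re P.trace * a ^ (2 * n))
      ≤ RCLike.re (P₀ * K ^ (2 * n)).trace / RCLike.re (K ^ (2 * n)).trace := by
  set Q := 1 - P
  have hQ : Q.PosSemidef := by
    open scoped MatrixOrder in exact nonneg_iff_posSemidef.mp hP.one_sub.nonneg
  have hKQ : Commute K Q := (Commute.one_right K).sub_right hKP
  have hQtr : RCLike.re Q.trace = Fintype.card ι - RCLike.re P.trace := by
    rw [trace_sub, trace_one, map_sub, RCLike.natCast_re]
  have hK2n : (K ^ (2 * n)).PosSemidef := by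
    simpa using posSemidef_pow_two_mul_mul hK .one (.one_right K) n
  set t := RCLike.re (K ^ (2 * n) * P).trace
  set s := RCLike.re (K ^ (2 * n) * Q).trace
  set r := RCLike.re ((P - P₀) * K ^ (2 * n)).trace
  have ht : a ^ (2 * n) * RCLike.re P.trace ≤ t :=
    pow_mul_re_trace_le_re_trace_pow_two_mul_mul ha.le hK hP.isIdempotentElem hKP hKPa n
  have ht0 : 0 < t := ht.trans_lt' (by positivity)
  have hs0 : 0 ≤ s := (posSemidef_pow_two_mul_mul hK hQ hKQ n).re_trace_nonneg
  have hb : 0 ≤ b := (norm_nonneg _).trans hKQb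
  have hs : s ≤ b ^ (2 * n) * Fintype.card ι :=
    (re_trace_pow_mul_le hQ hP.one_sub.isIdempotentElem hKQ _).trans <|
      mul_le_mul (pow_le_pow_left₀ (norm_nonneg _) hKQb _) (by linarith) hQ.re_trace_nonneg
        (by positivity)
  have htot : RCLike.re (K ^ (2 * n)).trace = t + s := by
    simp only [t, s, Q, mul_sub, mul_one, trace_sub, map_sub]
    ring
  have hr : r ≤ ε * (t + s) := by
    rw [← htot]
    exact (le_of_abs_le (abs_re_trace_mul_le hK2n _)).trans
      (mul_le_mul_of_nonneg_right hPP₀ hK2n.re_trace_nonneg)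
  have hP₀ : RCLike.re (P₀ * K ^ (2 * n)).trace = t - r := by
    simp only [t, r, sub_mul, trace_sub, map_sub, trace_mul_comm P]
    ring
  rw [hP₀, htot]
  calc _ ≤ 1 - ε - s / t := by
        gcongr 1 - ε - ?_
        exact div_le_div₀ (by positivity) (by linarith) (by positivity) (by linarith)
    _ ≤ _ := one_sub_sub_div_le_sub_div_add ht0 hs0 hr

end Matrix

open Matrix

theorem stmt2_general (D : ℕ)
    (K P P₀ : Matrix (Fin D) (Fin D) ℂ)
    (Γ Δ ε : ℝ) (hΔ : 0 < Δ) (hΔΓ : Δ < Γ)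
    (hK : K.IsHermitian)
    (hPherm : P.IsHermitian) (hPproj : P * P = P)
    (hN : 0 < P.trace.re)
    (hcomm : K * P = P * K)
    (hGamma : (K * P - (Real.sqrt Γ : ℂ) • P).PosSemidef)
    (hDelta : ‖(1 - P) * K * (1 - P)‖ ≤ Real.sqrt Δ)
    (hPP₀ : ‖P - P₀‖ ≤ ε)
    (η : ℝ) (hη0 : 0 < η)
    (n : ℕ) (hn : Real.log (D / (P.trace.re * η)) / Real.log (Γ / Δ) ≤ (n : ℝ)) :
    1 - ε - η ≤ (P₀ * (((K ^ (2 * n)).trace.re)⁻¹ • K ^ (2 * n))).trace.re := by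
  have hΓ : 0 < Γ := hΔ.trans hΔΓ
  have hD : (0 : ℝ) < D := Nat.cast_pos.mpr <| Nat.pos_of_ne_zero <| by
    rintro rfl; simp [Matrix.trace] at hN
  have hoverlap := one_sub_sub_le_re_trace_mul_pow_div (P₀ := P₀) (Real.sqrt_pos.mpr hΓ) hK
    ⟨hPproj, hPherm⟩ hcomm hN hGamma hDelta hPP₀ n
  simp only [pow_mul (Real.sqrt _), Real.sq_sqrt hΓ.le, Real.sq_sqrt hΔ.le, Fintype.card_fin,
    RCLike.re_to_complex] at hoverlap
  have hdepth : D * Δ ^ n / (P.trace.re * Γ ^ n) ≤ η := by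
    have := Real.le_pow_of_log_div_log_le (div_pos hD (mul_pos hN hη0)) ((one_lt_div hΔ).mpr hΔΓ) hn
    rw [div_pow, div_le_div_iff₀ (by positivity) (by positivity)] at this
    rw [div_le_iff₀ (by positivity)]
    linarith
  rw [Matrix.mul_smul, trace_smul, Complex.real_smul, Complex.re_ofReal_mul, inv_mul_eq_div]
  linarith

/-- Circuit-depth bound: a run of `n ≥ log(D/(Nη))/log(Γ/Δ)` successful measurements suffices to
reach ground-space overlap `1 - ε - η`. -/
theorem stmt2 (D : ℕ) (hD : 1 ≤ D)
    (K P P₀ : Matrix (Fin D) (Fin D) ℂ)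
    (Γ Δ ε : ℝ) (hΔ : 0 < Δ) (hΔΓ : Δ < Γ) (hε : 0 ≤ ε)
    (hK : K.IsHermitian)
    (hPherm : P.IsHermitian) (hPproj : P * P = P)
    (hP₀herm : P₀.IsHermitian) (hP₀proj : P₀ * P₀ = P₀)
    (hN : 0 < P.trace.re)
    (hcomm : K * P = P * K)
    (hGamma : (K * P - (Real.sqrt Γ : ℂ) • P).PosSemidef)
    (hDelta : ‖(1 - P) * K * (1 - P)‖ ≤ Real.sqrt Δ)
    (hPP₀ : ‖P - P₀‖ ≤ ε)
    (η : ℝ) (hη0 : 0 < η) (hη1 : η < 1)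
    (n : ℕ) (hn : Real.log (D / (P.trace.re * η)) / Real.log (Γ / Δ) ≤ (n : ℝ)) :
    1 - ε - η ≤ (P₀ * (((K ^ (2 * n)).trace.re)⁻¹ • K ^ (2 * n))).trace.re :=
  stmt2_general D K P P₀ Γ Δ ε hΔ hΔΓ hK hPherm hPproj hN hcomm hGamma hDelta hPP₀ η hη0 n hn
end

section
/- Let K be a Hermitian D×D complex matrix with ‖K‖ ≤ 1, let Π be an orthogonal projector with N := tr Π > 0, and let reals Γ > 0 and 0 ≤ Δ < 1 satisfy KΠ = ΠK, KΠ ≥ √Γ·Π in the Loewner order, and ‖(I−Π)K(I−Π)‖ ≤ √Δ. Then for every natural number n ≥ 1, tr(K^{2n}) > 0 and tr(∑_{k=0}^{n−1} K^{2k}) / tr(K^{2n}) ≤ Γ^{−n} · ( n + ((1−Δⁿ)/(1−Δ))·(D/N − 1) ). (The left-hand side equals the expected stopping time of the dissipative quantum eigensolver with global resampling until the first run of n successful measurement outcomes.) -/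
open scoped Matrix.Norms.L2Operator ComplexOrder MatrixOrder

/-! Split along `P` and `Q = 1 - P`, which both commute with `K`. Since `‖KQ‖ ≤ √Δ` and
`‖KP‖ ≤ 1`, we get `K^{2k} Q ≤ Δ^k Q` and `K^{2k} P ≤ P`, so
`tr ∑_{k<n} K^{2k} ≤ n N + (1 - Δⁿ)/(1 - Δ) (D - N)`. Conversely, `KP ≥ √Γ P` with `KP`
commuting with `P` gives `K^{2n} P ≥ Γⁿ P`, because products of commuting positive elements are
positive; as `K^{2n} Q ≥ 0`, this yields `tr K^{2n} ≥ Γⁿ N`. -/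

section CStarAlgebra

variable {A : Type*} [CStarAlgebra A] [PartialOrder A] [StarOrderedRing A] {k p : A}

theorem IsStarProjection.le_norm_smul (hp : IsStarProjection p) {x : A} (hx : IsSelfAdjoint x)
    (hpxp : p * x * p = x) : x ≤ ‖x‖ • p := by
  simpa [hp.isSelfAdjoint.star_eq, hpxp, hp.isIdempotentElem.eq] using
    CStarAlgebra.star_left_conjugate_le_norm_smul (a := p) hx

theorem pow_two_mul_mul_le_of_norm_mul_sq_le (hk : IsSelfAdjoint k) (hp : IsStarProjection p)
    (hkp : Commute k p) {c : ℝ} (hc : ‖k * p‖ ^ 2 ≤ c) (n : ℕ) :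
    k ^ (2 * n) * p ≤ c ^ n • p := by
  rcases Nat.eq_zero_or_pos n with rfl | hn
  · simp
  have hpow : k ^ (2 * n) * p = (k * p) ^ (2 * n) := by
    rw [hkp.mul_pow, hp.pow_eq (by omega)]
  have hsa : IsSelfAdjoint (k ^ (2 * n) * p) :=
    ((hk.pow _).commute_iff hp.isSelfAdjoint).mp (hkp.pow_left _)
  have hpxp : p * (k ^ (2 * n) * p) * p = k ^ (2 * n) * p := by
    rw [mul_assoc, mul_assoc, hp.isIdempotentElem.eq, ← mul_assoc, ← (hkp.pow_left _).eq,
      mul_assoc, hp.isIdempotentElem.eq]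
  have hnorm : ‖k ^ (2 * n) * p‖ ≤ c ^ n :=
    calc ‖k ^ (2 * n) * p‖ ≤ ‖k * p‖ ^ (2 * n) := hpow ▸ norm_pow_le' _ (by omega)
      _ = (‖k * p‖ ^ 2) ^ n := pow_mul _ _ _
      _ ≤ c ^ n := pow_le_pow_left₀ (by positivity) hc n
  exact (hp.le_norm_smul hsa hpxp).trans (smul_le_smul_of_nonneg_right hnorm hp.nonneg)

theorem smul_pow_le_pow_mul_of_smul_le (hp : IsStarProjection p) (hkp : Commute k p) {c : ℝ}
    (hc : 0 ≤ c) (h : c • p ≤ k * p) (m : ℕ) : c ^ m • p ≤ k ^ m * p := by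
  induction m with
  | zero => simp
  | succ m ih =>
    have hkm : 0 ≤ k ^ m * p := (smul_nonneg (pow_nonneg hc m) hp.nonneg).trans ih
    have hk : Commute k (k ^ m * p) := (Commute.self_pow k m).mul_right hkp
    have hp' : Commute p (k ^ m * p) := (hkp.pow_left m).symm.mul_right (Commute.refl p)
    have hpkp : p * (k ^ m * p) = k ^ m * p := by
      rw [← mul_assoc, ← (hkp.pow_left m).eq, mul_assoc, hp.isIdempotentElem.eq]
    calc c ^ (m + 1) • p = c • (c ^ m • p) := by rw [pow_succ', mul_smul]
      _ ≤ c • (k ^ m * p) := smul_le_smul_of_nonneg_left ih hc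
      _ = (c • p) * (k ^ m * p) := by rw [smul_mul_assoc, hpkp]
      _ ≤ (k * p) * (k ^ m * p) := by
        rw [← sub_nonneg, ← sub_mul]
        exact Commute.mul_nonneg (sub_nonneg.mpr h) hkm
          ((hk.mul_left hp').sub_left (hp'.smul_left c))
      _ = k ^ (m + 1) * p := by rw [mul_assoc, hpkp, ← mul_assoc, ← pow_succ']

theorem sq_pow_smul_le_pow_two_mul_of_smul_le (hk : IsSelfAdjoint k) (hp : IsStarProjection p)
    (hkp : Commute k p) {c : ℝ} (hc : 0 ≤ c) (h : c • p ≤ k * p) (n : ℕ) :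
    (c ^ 2) ^ n • p ≤ k ^ (2 * n) := by
  have hpow : 0 ≤ k ^ (2 * n) := by
    rw [pow_mul']
    exact (hk.pow n).sq_nonneg
  have hq : 0 ≤ k ^ (2 * n) * (1 - p) :=
    Commute.mul_nonneg hpow hp.one_sub.nonneg (((Commute.one_right k).sub_right hkp).pow_left _)
  calc (c ^ 2) ^ n • p = c ^ (2 * n) • p := by rw [pow_mul]
    _ ≤ k ^ (2 * n) * p := smul_pow_le_pow_mul_of_smul_le hp hkp hc h _
    _ ≤ k ^ (2 * n) * p + k ^ (2 * n) * (1 - p) := le_add_of_nonneg_right hq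
    _ = k ^ (2 * n) := by rw [← mul_add, add_sub_cancel, mul_one]

end CStarAlgebra

namespace Matrix

variable {ι : Type*} [Fintype ι]

theorem trace_re_le_trace_re_of_le {M N : Matrix ι ι ℂ} (h : M ≤ N) :
    M.trace.re ≤ N.trace.re := by
  have := (Complex.le_def.mp (PosSemidef.trace_nonneg h)).1
  rwa [trace_sub, Complex.sub_re, Complex.zero_re, sub_nonneg] at this

variable [DecidableEq ι] {K P : Matrix ι ι ℂ}

theorem trace_re_pow_two_mul_le (hK : IsSelfAdjoint K) (hKnorm : ‖K‖ ≤ 1)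
    (hP : IsStarProjection P) (hKP : Commute K P) {Δ : ℝ} (hΔ : ‖K * (1 - P)‖ ^ 2 ≤ Δ)
    (k : ℕ) : (K ^ (2 * k)).trace.re ≤ P.trace.re + Δ ^ k * (1 - P).trace.re := by
  have hKP_norm : ‖K * P‖ ^ 2 ≤ 1 :=
    pow_le_one₀ (norm_nonneg _)
      ((norm_mul_le K P).trans (mul_le_one₀ hKnorm (norm_nonneg P) hP.norm_le))
  have hsplit : K ^ (2 * k) = K ^ (2 * k) * P + K ^ (2 * k) * (1 - P) := by
    rw [← mul_add, add_sub_cancel, mul_one]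
  have hPpart := trace_re_le_trace_re_of_le
    (pow_two_mul_mul_le_of_norm_mul_sq_le hK hP hKP hKP_norm k)
  have hQpart := trace_re_le_trace_re_of_le (pow_two_mul_mul_le_of_norm_mul_sq_le hK hP.one_sub
    ((Commute.one_right K).sub_right hKP) hΔ k)
  rw [hsplit, trace_add, Complex.add_re]
  simp only [one_pow, one_smul, trace_smul, Complex.smul_re, smul_eq_mul] at hPpart hQpart
  linarith

theorem trace_re_sum_pow_two_mul_le (hK : IsSelfAdjoint K) (hKnorm : ‖K‖ ≤ 1)
    (hP : IsStarProjection P) (hKP : Commute K P) {Δ : ℝ} (hΔ : ‖K * (1 - P)‖ ^ 2 ≤ Δ)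
    (n : ℕ) : (∑ k ∈ Finset.range n, K ^ (2 * k)).trace.re ≤
      n * P.trace.re + (∑ k ∈ Finset.range n, Δ ^ k) * (1 - P).trace.re := by
  rw [trace_sum, Complex.re_sum]
  calc ∑ k ∈ Finset.range n, (K ^ (2 * k)).trace.re
      ≤ ∑ k ∈ Finset.range n, (P.trace.re + Δ ^ k * (1 - P).trace.re) :=
        Finset.sum_le_sum fun k _ => trace_re_pow_two_mul_le hK hKnorm hP hKP hΔ k
    _ = _ := by
      rw [Finset.sum_add_distrib, Finset.sum_const, Finset.card_range, nsmul_eq_mul,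
        Finset.sum_mul]

theorem sq_pow_mul_trace_re_le_trace_re_pow_two_mul (hK : IsSelfAdjoint K)
    (hP : IsStarProjection P) (hKP : Commute K P) {c : ℝ} (hc : 0 ≤ c) (h : c • P ≤ K * P)
    (n : ℕ) : (c ^ 2) ^ n * P.trace.re ≤ (K ^ (2 * n)).trace.re := by
  simpa only [trace_smul, Complex.smul_re, smul_eq_mul] using
    trace_re_le_trace_re_of_le (sq_pow_smul_le_pow_two_mul_of_smul_le hK hP hKP hc h n)

end Matrix

open Matrix

theorem stmt3_general (D : ℕ)
    (K P : Matrix (Fin D) (Fin D) ℂ)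
    (Γ Δ : ℝ) (hΓ : 0 < Γ) (hΔ0 : 0 ≤ Δ) (hΔ1 : Δ < 1)
    (hK : K.IsHermitian) (hKnorm : ‖K‖ ≤ 1)
    (hPherm : P.IsHermitian) (hPproj : P * P = P)
    (hN : 0 < P.trace.re)
    (hcomm : K * P = P * K)
    (hGamma : (K * P - (Real.sqrt Γ : ℂ) • P).PosSemidef)
    (hDelta : ‖(1 - P) * K * (1 - P)‖ ≤ Real.sqrt Δ)
    (n : ℕ) :
    0 < (K ^ (2 * n)).trace.re ∧
      ((∑ k ∈ Finset.range n, K ^ (2 * k)).trace.re) / (K ^ (2 * n)).trace.re ≤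
        (Γ ^ n)⁻¹ * ((n : ℝ) + (1 - Δ ^ n) / (1 - Δ) * ((D : ℝ) / P.trace.re - 1)) := by
  have hP : IsStarProjection P := ⟨hPproj, hPherm⟩
  have hGamma' : Real.sqrt Γ • P ≤ K * P := by
    rwa [le_iff, RCLike.real_smul_eq_coe_smul (K := ℂ)]
  have hKQ_norm : ‖K * (1 - P)‖ ^ 2 ≤ Δ := by
    rwa [← ((Commute.one_right K).sub_right hcomm).eq, mul_assoc,
      hP.one_sub.isIdempotentElem.eq, ← sq_le_sq₀ (norm_nonneg _) (Real.sqrt_nonneg Δ),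
      Real.sq_sqrt hΔ0] at hDelta
  have hlower := sq_pow_mul_trace_re_le_trace_re_pow_two_mul hK hP hcomm (Real.sqrt_nonneg Γ)
    hGamma' n
  rw [Real.sq_sqrt hΓ.le] at hlower
  have hpos : 0 < (K ^ (2 * n)).trace.re := lt_of_lt_of_le (by positivity) hlower
  have hupper := trace_re_sum_pow_two_mul_le hK hKnorm hP hcomm hKQ_norm n
  have htrQ : (1 - P).trace.re = D - P.trace.re := by simp
  have hQ_nonneg : 0 ≤ (1 - P).trace.re := by
    simpa using trace_re_le_trace_re_of_le hP.one_sub.nonneg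
  refine ⟨hpos, (div_le_div₀ (by positivity) hupper (by positivity) hlower).trans_eq ?_⟩
  rw [geom_sum_eq hΔ1.ne, htrQ]
  field_simp [sub_ne_zero.mpr hΔ1.ne, sub_ne_zero.mpr hΔ1.ne']
  ring

/-- Bound on the expected stopping time of the DQE with global resampling:
`tr(∑_{k<n} K^{2k}) / tr(K^{2n}) ≤ Γ⁻ⁿ (n + (1-Δⁿ)/(1-Δ) (D/N - 1))`. -/
theorem stmt3 (D : ℕ) (hD : 1 ≤ D)
    (K P : Matrix (Fin D) (Fin D) ℂ)
    (Γ Δ : ℝ) (hΓ : 0 < Γ) (hΔ0 : 0 ≤ Δ) (hΔ1 : Δ < 1)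
    (hK : K.IsHermitian) (hKnorm : ‖K‖ ≤ 1)
    (hPherm : P.IsHermitian) (hPproj : P * P = P)
    (hN : 0 < P.trace.re)
    (hcomm : K * P = P * K)
    (hGamma : (K * P - (Real.sqrt Γ : ℂ) • P).PosSemidef)
    (hDelta : ‖(1 - P) * K * (1 - P)‖ ≤ Real.sqrt Δ)
    (n : ℕ) (hn : 1 ≤ n) :
    0 < (K ^ (2 * n)).trace.re ∧
      ((∑ k ∈ Finset.range n, K ^ (2 * k)).trace.re) / (K ^ (2 * n)).trace.re ≤
        (Γ ^ n)⁻¹ * ((n : ℝ) + (1 - Δ ^ n) / (1 - Δ) * ((D : ℝ) / P.trace.re - 1)) :=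
  stmt3_general D K P Γ Δ hΓ hΔ0 hΔ1 hK hKnorm hPherm hPproj hN hcomm hGamma hDelta n
end

section
/- Let K be a Hermitian D×D complex matrix with ‖K‖ ≤ 1, let Π and Π₀ be orthogonal projectors with N := tr Π > 0, and let reals Γ, Δ, ε with 0 ≤ Δ ≤ Γ ≤ 1, Δ < 1 and ε ≥ 0 satisfy KΠ = ΠK, KΠ ≥ √Γ·Π in the Loewner order, ‖(I−Π)K(I−Π)‖ ≤ √Δ, and ‖Π − Π₀‖ ≤ ε. Suppose ρ is a density matrix satisfying the fixed-point equation ρ = KρK + (1 − tr(KρK))·I/D. Then tr(Π₀ ρ) ≥ (1−Δ)/((Γ−Δ) + (D/N)(1−Γ)) − ε. -/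
/-!
Write `p = tr(Πρ)`, `q = tr(KΠKρ)`, `t = tr(KρK)` and `N = tr Π`. Multiplying the fixed-point
equation by `Π` and taking traces gives the balance equation `p = q + (1 - t) N / D`.
Because `K` commutes with `Π`, the Loewner bound `KΠ ≥ √Γ Π` squares to `KΠK ≥ Γ Π`, and the
norm bound on `(1 - Π) K (1 - Π)` gives `K(1 - Π)K ≤ Δ (1 - Π)`; pairing with `ρ` yields
`q ≥ Γ p` and `t - q ≤ Δ (1 - p)`. Eliminating `q` and `t` from the balance equation leaves the
lower bound on `p`, and `Π - Π₀ ≤ ε` turns it into one on `tr(Π₀ρ)`.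
-/

open scoped Matrix.Norms.L2Operator ComplexOrder MatrixOrder

section CStarAlgebra

variable {A : Type*} [CStarAlgebra A] [PartialOrder A] [StarOrderedRing A]

lemma IsSelfAdjoint.le_algebraMap_of_norm_le {a : A} (ha : IsSelfAdjoint a) {r : ℝ}
    (hr : ‖a‖ ≤ r) : a ≤ algebraMap ℝ A r :=
  ha.le_algebraMap_norm_self.trans (algebraMap_mono A hr)

lemma IsStarProjection.star_mul_self_le_smul {p b : A} (hp : IsStarProjection p)
    (hbp : b * p = b) {r : ℝ} (hr : ‖b‖ ≤ r) : star b * b ≤ r ^ 2 • p := by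
  have hsb : star b = p * star b := by
    conv_lhs => rw [← hbp, star_mul, hp.isSelfAdjoint.star_eq]
  have hb : star b * b = p * (star b * b) * p := by
    calc star b * b = p * star b * (b * p) := by rw [← hsb, hbp]
      _ = p * (star b * b) * p := by simp only [mul_assoc]
  have hnorm : star b * b ≤ algebraMap ℝ A (r ^ 2) :=
    CStarAlgebra.star_mul_le_algebraMap_norm_sq.trans
      (algebraMap_mono A (pow_le_pow_left₀ (norm_nonneg b) hr 2))
  calc star b * b = p * (star b * b) * p := hb
    _ ≤ p * algebraMap ℝ A (r ^ 2) * p := hp.isSelfAdjoint.conjugate_le_conjugate hnorm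
    _ = r ^ 2 • p := by
      rw [Algebra.algebraMap_eq_smul_one, mul_smul_comm, mul_one, smul_mul_assoc,
        hp.isIdempotentElem.eq]

end CStarAlgebra

namespace Matrix

variable {n : Type*} [Fintype n]

lemma re_trace_mul_le_re_trace_mul_s4 {A B ρ : Matrix n n ℂ} (hAB : A ≤ B) (hρ : ρ.PosSemidef) :
    (A * ρ).trace.re ≤ (B * ρ).trace.re := by
  classical
  obtain ⟨X, rfl⟩ := CStarAlgebra.nonneg_iff_eq_star_mul_self.mp hρ.nonneg
  have h := ((le_iff.mp hAB).mul_mul_conjTranspose_same X).trace_nonneg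
  rw [trace_mul_cycle, ← star_eq_conjTranspose, trace_mul_comm, Matrix.sub_mul, trace_sub,
    sub_nonneg] at h
  exact Complex.re_le_re h

lemma smul_sq_le_mul_self {P X : Matrix n n ℂ} {c : ℝ} (hc : 0 ≤ c) (hP : P * P = P)
    (hXP : X * P = X) (hPX : P * X = X) (h : c • P ≤ X) : c ^ 2 • P ≤ X * X := by
  set Y := X - c • P with hY
  have hYpsd : Y.PosSemidef := le_iff.mp h
  have hid : X * X - c ^ 2 • P = Yᴴ * Y + (2 * c) • Y := by
    rw [hYpsd.isHermitian.eq, hY]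
    simp only [sub_mul, mul_sub, smul_mul_assoc, mul_smul_comm, smul_sub, smul_smul, hP, hXP,
      hPX]
    module
  rw [le_iff, hid]
  exact (posSemidef_conjTranspose_mul_self Y).add (hYpsd.smul (by positivity))

lemma sq_smul_le_mul_mul_of_smul_le_mul {K P : Matrix n n ℂ} (hKP : Commute K P)
    (hP : IsIdempotentElem P) {c : ℝ} (hc : 0 ≤ c) (h : c • P ≤ K * P) :
    c ^ 2 • P ≤ K * P * K := by
  have hKPP : K * P * P = K * P := by rw [mul_assoc, hP.eq]
  have hPKP : P * (K * P) = K * P := by rw [← mul_assoc, ← hKP.eq, hKPP]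
  have hsq : K * P * (K * P) = K * P * K := by nth_rw 2 [hKP.eq]; rw [← mul_assoc, hKPP]
  simpa only [hsq] using smul_sq_le_mul_self hc hP.eq hKPP hPKP h

lemma mul_self_sub_le_smul_one_sub [DecidableEq n] {K P : Matrix n n ℂ} (hK : K.IsHermitian)
    (hP : IsStarProjection P) (hKP : Commute K P) {r : ℝ}
    (hr : ‖(1 - P) * K * (1 - P)‖ ≤ r) : K * K - K * P * K ≤ r ^ 2 • (1 - P) := by
  have hPK : P * K = K * P := hKP.eq.symm
  have hPKc : ∀ C, P * (K * C) = K * (P * C) := hKP.symm.left_comm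
  have hbQ : (1 - P) * K * (1 - P) * (1 - P) = (1 - P) * K * (1 - P) := by
    rw [mul_assoc, hP.one_sub.isIdempotentElem.eq]
  have hbb : star ((1 - P) * K * (1 - P)) * ((1 - P) * K * (1 - P)) = K * K - K * P * K := by
    simp only [star_mul, star_sub, hP.isSelfAdjoint.star_eq,
      (hK : IsSelfAdjoint K).star_eq, mul_sub, sub_mul, one_mul, mul_one, mul_assoc, hPK, hPKc,
      hP.isIdempotentElem.eq]
    abel
  simpa only [hbb] using hP.one_sub.star_mul_self_le_smul hbQ hr

lemma re_trace_mul_le_add_of_norm_sub_le [DecidableEq n] {A B ρ : Matrix n n ℂ}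
    (hA : A.IsHermitian) (hB : B.IsHermitian) {ε : ℝ} (hAB : ‖A - B‖ ≤ ε)
    (hρ : ρ.PosSemidef) (hρtr : ρ.trace = 1) : (A * ρ).trace.re ≤ (B * ρ).trace.re + ε := by
  have h := re_trace_mul_le_re_trace_mul_s4
    ((hA.sub hB).isSelfAdjoint.le_algebraMap_of_norm_le hAB) hρ
  simp only [Matrix.sub_mul, trace_sub, Complex.sub_re, Algebra.algebraMap_eq_smul_one,
    smul_mul_assoc, one_mul, trace_smul, Complex.real_smul, hρtr, mul_one, Complex.ofReal_re] at h
  linarith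

lemma re_trace_mul_eq_of_eq_conj_add_smul_one [DecidableEq n] {K P ρ : Matrix n n ℂ}
    (hP : P.PosSemidef) {c : ℝ}
    (hfix : ρ = K * ρ * K + (1 - (K * ρ * K).trace) • ((c : ℂ) • 1)) :
    (P * ρ).trace.re =
      (K * P * K * ρ).trace.re + (1 - (K * ρ * K).trace.re) * (c * P.trace.re) := by
  have hcyc : (P * (K * ρ * K)).trace = (K * P * K * ρ).trace := by
    rw [show P * (K * ρ * K) = P * K * ρ * K by simp only [mul_assoc], trace_mul_comm]
    simp only [mul_assoc]
  have him : P.trace.im = 0 := (Complex.nonneg_iff.mp hP.trace_nonneg).2.symm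
  conv_lhs => rw [hfix]
  simp [Matrix.mul_add, hcyc, Complex.mul_re, him]

end Matrix

lemma overlap_lower_bound_of_balance {p q t N D Γ Δ : ℝ} (hN : 0 < N) (hND : N ≤ D)
    (hΔΓ : Δ ≤ Γ) (hΓ1 : Γ ≤ 1) (hp : 0 ≤ p) (hΓ : Γ * p ≤ q) (hΔ : t - q ≤ Δ * (1 - p))
    (hbal : p = q + (1 - t) * (D⁻¹ * N)) :
    (1 - Δ) / ((Γ - Δ) + D / N * (1 - Γ)) ≤ p := by
  have hD : 0 < D := hN.trans_le hND
  have hbal' : D * p = D * q + (1 - t) * N := by rw [hbal]; field_simp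
  have key : N * (1 - Δ) ≤ p * ((Γ - Δ) * N + D * (1 - Γ)) := by
    nlinarith [mul_nonneg (sub_nonneg.2 hND) (sub_nonneg.2 hΓ),
      mul_nonneg hN.le (sub_nonneg.2 hΔ)]
  refine div_le_of_le_mul₀ (by positivity) hp ?_
  calc 1 - Δ = N * (1 - Δ) / N := by field_simp
    _ ≤ p * ((Γ - Δ) * N + D * (1 - Γ)) / N := by gcongr
    _ = p * ((Γ - Δ) + D / N * (1 - Γ)) := by field_simp

theorem stmt4_general (D : ℕ)
    (K P P₀ ρ : Matrix (Fin D) (Fin D) ℂ)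
    (Γ Δ ε : ℝ) (hΔ0 : 0 ≤ Δ) (hΔΓ : Δ ≤ Γ) (hΓ1 : Γ ≤ 1)
    (hK : K.IsHermitian)
    (hPherm : P.IsHermitian) (hPproj : P * P = P)
    (hP₀herm : P₀.IsHermitian)
    (hN : 0 < P.trace.re)
    (hcomm : K * P = P * K)
    (hGamma : (K * P - (Real.sqrt Γ : ℂ) • P).PosSemidef)
    (hDelta : ‖(1 - P) * K * (1 - P)‖ ≤ Real.sqrt Δ)
    (hPP₀ : ‖P - P₀‖ ≤ ε)
    (hρ : ρ.PosSemidef) (hρtr : ρ.trace = 1)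
    (hfix : ρ = K * ρ * K + (1 - (K * ρ * K).trace) • ((D : ℂ)⁻¹ • (1 : Matrix (Fin D) (Fin D) ℂ))) :
    (1 - Δ) / ((Γ - Δ) + ((D : ℝ) / P.trace.re) * (1 - Γ)) - ε ≤ (P₀ * ρ).trace.re := by
  have hP : IsStarProjection P := ⟨hPproj, hPherm⟩
  have hKP : Commute K P := hcomm
  have hρre : ρ.trace.re = 1 := by simp [hρtr]
  have hND : P.trace.re ≤ D := by
    simpa using Matrix.re_trace_mul_le_re_trace_mul_s4 hP.le_one Matrix.PosSemidef.one
  have hp : 0 ≤ (P * ρ).trace.re := by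
    simpa using Matrix.re_trace_mul_le_re_trace_mul_s4 hP.nonneg hρ
  have hΓ : Γ * (P * ρ).trace.re ≤ (K * P * K * ρ).trace.re := by
    have h := Matrix.sq_smul_le_mul_mul_of_smul_le_mul hKP hP.isIdempotentElem
      (Real.sqrt_nonneg Γ) (by simpa [Matrix.le_iff] using hGamma)
    rw [Real.sq_sqrt (hΔ0.trans hΔΓ)] at h
    simpa using Matrix.re_trace_mul_le_re_trace_mul_s4 h hρ
  have hΔ :
      (K * ρ * K).trace.re - (K * P * K * ρ).trace.re ≤ Δ * (1 - (P * ρ).trace.re) := by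
    have h := Matrix.mul_self_sub_le_smul_one_sub hK hP hKP hDelta
    rw [Real.sq_sqrt hΔ0] at h
    have hcyc : (K * ρ * K).trace = (K * K * ρ).trace := by
      rw [Matrix.trace_mul_comm, Matrix.mul_assoc]
    simpa [Matrix.sub_mul, hcyc, hρre] using Matrix.re_trace_mul_le_re_trace_mul_s4 h hρ
  have hbal := Matrix.re_trace_mul_eq_of_eq_conj_add_smul_one (c := (D : ℝ)⁻¹)
    (Matrix.nonneg_iff_posSemidef.mp hP.nonneg) (by simpa using hfix)
  have hP₀ := Matrix.re_trace_mul_le_add_of_norm_sub_le hPherm hP₀herm hPP₀ hρ hρtr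
  linarith [overlap_lower_bound_of_balance hN hND hΔΓ hΓ1 hp hΓ hΔ hbal]

/-- Ground-space overlap of any fixed point of the dissipative CPT map
`ρ ↦ KρK + (1 - tr(KρK))·I/D`. -/
theorem stmt4 (D : ℕ) (hD : 1 ≤ D)
    (K P P₀ ρ : Matrix (Fin D) (Fin D) ℂ)
    (Γ Δ ε : ℝ) (hΔ0 : 0 ≤ Δ) (hΔΓ : Δ ≤ Γ) (hΓ1 : Γ ≤ 1) (hΔ1 : Δ < 1) (hε : 0 ≤ ε)
    (hK : K.IsHermitian) (hKnorm : ‖K‖ ≤ 1)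
    (hPherm : P.IsHermitian) (hPproj : P * P = P)
    (hP₀herm : P₀.IsHermitian) (hP₀proj : P₀ * P₀ = P₀)
    (hN : 0 < P.trace.re)
    (hcomm : K * P = P * K)
    (hGamma : (K * P - (Real.sqrt Γ : ℂ) • P).PosSemidef)
    (hDelta : ‖(1 - P) * K * (1 - P)‖ ≤ Real.sqrt Δ)
    (hPP₀ : ‖P - P₀‖ ≤ ε)
    (hρ : ρ.PosSemidef) (hρtr : ρ.trace = 1)
    (hfix : ρ = K * ρ * K + (1 - (K * ρ * K).trace) • ((D : ℂ)⁻¹ • (1 : Matrix (Fin D) (Fin D) ℂ))) :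
    (1 - Δ) / ((Γ - Δ) + ((D : ℝ) / P.trace.re) * (1 - Γ)) - ε ≤ (P₀ * ρ).trace.re :=
  stmt4_general D K P P₀ ρ Γ Δ ε hΔ0 hΔΓ hΓ1 hK hPherm hPproj hP₀herm hN hcomm hGamma hDelta hPP₀ hρ
    hρtr hfix
end

section
/- Let K be a Hermitian D×D complex matrix with ‖K‖ < 1. Then I − K² is invertible, tr((I−K²)^{−1}) > 0, and the matrix ρ∞ := (I−K²)^{−1} / tr((I−K²)^{−1}) is the unique density matrix satisfying the fixed-point equation ρ = KρK + (1 − tr(KρK))·I/D. -/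
open scoped Matrix.Norms.L2Operator ComplexOrder

/-! The map `X ↦ X - K * X * K` is injective when `‖K‖ < 1`: a nonzero `X = K * X * K` would give
`‖X‖ ≤ ‖K‖² ‖X‖`. Since `K` commutes with `A = (1 - K²)⁻¹`, it sends `A` to `1`, so the matrices `ρ`
with `ρ - K * ρ * K` scalar are exactly the multiples of `A`. These are also the trace-one fixed
points of the dissipation map, and positivity of `A` comes from `x* (1 - K²) x = ‖x‖² - ‖K x‖² > 0`. -/

lemma eq_zero_of_mul_mul_eq_self {R : Type*} [NonUnitalNormedRing R] {k x : R} (hk : ‖k‖ < 1)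
    (h : k * x * k = x) : x = 0 := by
  have hle : ‖x‖ ≤ ‖k‖ ^ 2 * ‖x‖ :=
    calc ‖x‖ = ‖k * x * k‖ := by rw [h]
      _ ≤ ‖k‖ * ‖x‖ * ‖k‖ := (norm_mul_le _ _).trans (by gcongr; exact norm_mul_le _ _)
      _ = ‖k‖ ^ 2 * ‖x‖ := by ring
  have hk2 : ‖k‖ ^ 2 < 1 := pow_lt_one₀ (norm_nonneg k) hk two_ne_zero
  exact norm_le_zero_iff.1 (by nlinarith [norm_nonneg x])

lemma sub_mul_mul_injective {R : Type*} [NonUnitalNormedRing R] {k : R} (hk : ‖k‖ < 1) :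
    Function.Injective fun x => x - k * x * k := fun x y h => by
  refine sub_eq_zero.1 (eq_zero_of_mul_mul_eq_self hk ?_)
  rw [mul_sub, sub_mul]
  exact (sub_eq_sub_iff_sub_eq_sub.1 h).symm

lemma isUnit_one_sub_sq_of_norm_lt_one {R : Type*} [NormedRing R] [CompleteSpace R] {k : R}
    (hk : ‖k‖ < 1) : IsUnit (1 - k ^ 2) :=
  (Units.oneSub (k ^ 2) ((norm_pow_le' k two_pos).trans_lt
    (pow_lt_one₀ (norm_nonneg k) hk two_ne_zero))).isUnit

namespace Matrix

variable {n 𝕜 : Type*} [Fintype n] [RCLike 𝕜]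

lemma star_dotProduct_self_eq_norm_sq (x : n → 𝕜) :
    star x ⬝ᵥ x = ((‖WithLp.toLp 2 x‖ ^ 2 : ℝ) : 𝕜) := by
  rw [dotProduct_comm, ← EuclideanSpace.inner_toLp_toLp, inner_self_eq_norm_sq_to_K]
  push_cast
  rfl

variable [DecidableEq n]

lemma inv_one_sub_sq_sub_mul_mul {α : Type*} [CommRing α] {K : Matrix n n α}
    (hK : IsUnit (1 - K ^ 2)) : (1 - K ^ 2)⁻¹ - K * (1 - K ^ 2)⁻¹ * K = 1 := by
  have hcomm : Commute K (1 - K ^ 2)⁻¹ := by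
    have h : Commute K hK.unit := by
      rw [hK.unit_spec]
      exact (Commute.one_right K).sub_right ((Commute.refl K).pow_right 2)
    simpa only [coe_units_inv, hK.unit_spec] using h.units_inv_right
  calc (1 - K ^ 2)⁻¹ - K * (1 - K ^ 2)⁻¹ * K = (1 - K ^ 2)⁻¹ * (1 - K ^ 2) := by
        rw [hcomm.eq, mul_assoc, ← sq, mul_sub, mul_one]
    _ = 1 := nonsing_inv_mul _ ((isUnit_iff_isUnit_det _).1 hK)

lemma sub_mul_mul_eq_smul_one_iff {K ρ : Matrix n n 𝕜} (hK : ‖K‖ < 1) (t : 𝕜) :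
    ρ - K * ρ * K = t • 1 ↔ ρ = t • (1 - K ^ 2)⁻¹ := by
  refine Iff.trans ?_ (sub_mul_mul_injective hK).eq_iff
  rw [mul_smul_comm, smul_mul_assoc, ← smul_sub,
    inv_one_sub_sq_sub_mul_mul (isUnit_one_sub_sq_of_norm_lt_one hK)]

lemma posDef_one_sub_conjTranspose_mul_self {A : Matrix n n 𝕜} (hA : ‖A‖ < 1) :
    (1 - Aᴴ * A).PosDef := by
  refine .of_dotProduct_mulVec_pos (isHermitian_one.sub (isHermitian_conjTranspose_mul_self A))
    fun x hx => ?_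
  have hx : 0 < ‖WithLp.toLp 2 x‖ := norm_pos_iff.2 (by simpa using hx)
  have hAx : ‖WithLp.toLp 2 (A *ᵥ x)‖ < ‖WithLp.toLp 2 x‖ :=
    (l2_opNorm_mulVec A (WithLp.toLp 2 x)).trans_lt (mul_lt_of_lt_one_left hx hA)
  have hquad : star x ⬝ᵥ ((1 - Aᴴ * A) *ᵥ x) = star x ⬝ᵥ x - star (A *ᵥ x) ⬝ᵥ (A *ᵥ x) := by
    rw [sub_mulVec, one_mulVec, dotProduct_sub, ← mulVec_mulVec, dotProduct_mulVec, star_mulVec]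
  rw [hquad, star_dotProduct_self_eq_norm_sq, star_dotProduct_self_eq_norm_sq, ← RCLike.ofReal_sub,
    RCLike.ofReal_pos, sub_pos]
  gcongr

lemma IsHermitian.posDef_one_sub_sq {K : Matrix n n 𝕜} (hK : K.IsHermitian) (hKn : ‖K‖ < 1) :
    (1 - K ^ 2).PosDef := by
  simpa [sq, hK.eq] using posDef_one_sub_conjTranspose_mul_self hKn

lemma eq_mul_mul_add_smul_one_iff [Nonempty n] {K ρ : Matrix n n 𝕜} (hρ : ρ.trace = 1) :
    ρ = K * ρ * K + (1 - (K * ρ * K).trace) • ((Fintype.card n : 𝕜)⁻¹ • 1) ↔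
      ∃ s : 𝕜, ρ - K * ρ * K = s • 1 := by
  refine ⟨fun h => ⟨_, sub_eq_iff_eq_add'.2 (h.trans (by rw [smul_smul]))⟩, fun ⟨s, hs⟩ => ?_⟩
  rw [← sub_sub_cancel ρ (K * ρ * K), hs, trace_sub, hρ, trace_smul, trace_one, smul_eq_mul,
    sub_sub_cancel, smul_smul, mul_inv_cancel_right₀ (Nat.cast_ne_zero.2 Fintype.card_ne_zero),
    sub_add_cancel]

end Matrix

/-- For `‖K‖ < 1` Hermitian, `(I - K²)⁻¹/tr((I - K²)⁻¹)` is the unique density-matrix fixed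
point of the map `ρ ↦ KρK + (1 - tr(KρK))·I/D`. -/
theorem stmt5 (D : ℕ) (hD : 1 ≤ D)
    (K : Matrix (Fin D) (Fin D) ℂ)
    (hK : K.IsHermitian) (hKnorm : ‖K‖ < 1) :
    IsUnit (1 - K ^ 2) ∧
    0 < ((1 - K ^ 2)⁻¹).trace.re ∧
    (let ρfix : Matrix (Fin D) (Fin D) ℂ := (((1 - K ^ 2)⁻¹).trace.re)⁻¹ • (1 - K ^ 2)⁻¹
     ρfix.PosSemidef ∧ ρfix.trace = 1 ∧
     ρfix = K * ρfix * K +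
        (1 - (K * ρfix * K).trace) • ((D : ℂ)⁻¹ • (1 : Matrix (Fin D) (Fin D) ℂ)) ∧
     ∀ ρ : Matrix (Fin D) (Fin D) ℂ, ρ.PosSemidef → ρ.trace = 1 →
       ρ = K * ρ * K + (1 - (K * ρ * K).trace) • ((D : ℂ)⁻¹ • (1 : Matrix (Fin D) (Fin D) ℂ)) →
       ρ = ρfix) := by
  have : NeZero D := ⟨by omega⟩
  have hM := hK.posDef_one_sub_sq hKnorm
  set A := (1 - K ^ 2)⁻¹
  set c := A.trace.re
  obtain ⟨hc, him⟩ := Complex.lt_def.1 hM.inv.trace_pos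
  have htrA : A.trace = c := Complex.ext rfl (by simpa using him.symm)
  have hsmul : c⁻¹ • A = ((c⁻¹ : ℝ) : ℂ) • A := (Complex.coe_smul _ _).symm
  have htr : (c⁻¹ • A).trace = 1 := by
    rw [hsmul, Matrix.trace_smul, htrA, smul_eq_mul, ← Complex.ofReal_mul, inv_mul_cancel₀ hc.ne',
      Complex.ofReal_one]
  refine ⟨hM.isUnit, hc, hM.inv.posSemidef.smul (inv_nonneg.2 hc.le), htr, ?_, ?_⟩
  · simpa only [Fintype.card_fin] using (Matrix.eq_mul_mul_add_smul_one_iff htr).2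
      ⟨_, by rw [hsmul, Matrix.sub_mul_mul_eq_smul_one_iff hKnorm]⟩
  · intro ρ _ hρ hfix
    obtain ⟨s, hs⟩ := (Matrix.eq_mul_mul_add_smul_one_iff hρ).1 (by simpa only [Fintype.card_fin] using hfix)
    have hρA : ρ = s • A := (Matrix.sub_mul_mul_eq_smul_one_iff hKnorm s).1 hs
    have hs_eq : s = ((c⁻¹ : ℝ) : ℂ) := by
      rw [Complex.ofReal_inv, ← htrA]
      refine eq_inv_of_mul_eq_one_left ?_
      rw [← smul_eq_mul, ← Matrix.trace_smul, ← hρA, hρ]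
    rw [hsmul, hρA, hs_eq]
end

section
/- Let K be a Hermitian D×D complex matrix with ‖K‖ < 1, let Π be a nonzero orthogonal projector, and let reals Γ ≥ 0 and 0 ≤ Δ < 1 satisfy KΠ = ΠK, KΠ ≥ √Γ·Π in the Loewner order, and ‖(I−Π)K(I−Π)‖ ≤ √Δ. Then Γ < 1, the inverse (I−K²)^{−1} commutes with Π, and one has the Loewner-order bounds Π (I−K²)^{−1} Π ≥ (1/(1−Γ))·Π and (I−Π)(I−K²)^{−1}(I−Π) ≤ (1/(1−Δ))·(I−Π). -/
/-!
Everything happens in a unital C⋆-algebra, where a product of commuting nonnegative elements is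
nonnegative. As `K` commutes with `Π`, so do `M = 1 - K²` and `M⁻¹`. On the range of `Π`,
`K²Π - ΓΠ = (KΠ + √Γ Π)(KΠ - √Γ Π) ≥ 0`, i.e. `MΠ ≤ (1 - Γ)Π`; on the range of `Q = 1 - Π`,
`K²Q = (QKQ)⋆(QKQ) ≤ ‖QKQ‖² Q ≤ ΔQ`, i.e. `MQ ≥ (1 - Δ)Q`. Such bounds invert because
`M⁻¹Π - t⁻¹Π = t⁻¹ M⁻¹ (tΠ - MΠ)` is again a product of commuting nonnegative elements.
Finally `√Γ Π ≤ KΠ ≤ ‖K‖ Π` with `Π ≠ 0` forces `√Γ ≤ ‖K‖ < 1`.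
-/

open scoped Matrix.Norms.L2Operator ComplexOrder MatrixOrder Ring

lemma Commute.ringInverse_left {M₀ : Type*} [MonoidWithZero M₀] {a b : M₀} (h : Commute a b) :
    Commute a⁻¹ʳ b := by
  by_cases ha : IsUnit a
  · lift a to M₀ˣ using ha
    rw [Ring.inverse_unit]
    exact h.units_inv_left
  · rw [Ring.inverse_non_unit _ ha]
    exact Commute.zero_left b

lemma ringInverse_mul_sub_inv_smul {𝕜 R : Type*} [Field 𝕜] [Ring R] [Algebra 𝕜 R] {a : R}
    (ha : IsUnit a) (p : R) {t : 𝕜} (ht : t ≠ 0) :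
    a⁻¹ʳ * p - t⁻¹ • p = t⁻¹ • (a⁻¹ʳ * (t • p - a * p)) := by
  rw [mul_sub, ← mul_assoc, Ring.inverse_mul_cancel _ ha, one_mul, mul_smul_comm, smul_sub,
    smul_smul, inv_mul_cancel₀ ht, one_smul]

lemma IsIdempotentElem.mul_mul_eq_mul_of_commute {S : Type*} [Semigroup S] {p x : S}
    (hp : IsIdempotentElem p) (hxp : Commute x p) : p * x * p = x * p := by
  rw [← hxp.eq, mul_assoc, hp.eq]

section CStarAlgebra

variable {A : Type*} [CStarAlgebra A] [PartialOrder A] [StarOrderedRing A]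

lemma IsStrictlyPositive.ringInverse_mul_nonneg {a x : A} (ha : IsStrictlyPositive a)
    (hx : 0 ≤ x) (hax : Commute a x) : 0 ≤ a⁻¹ʳ * x :=
  Commute.mul_nonneg ha.ringInverse.nonneg hx hax.ringInverse_left

lemma inv_smul_le_ringInverse_mul {a p : A} (ha : IsStrictlyPositive a) (hap : Commute a p)
    {t : ℝ} (ht : 0 < t) (h : a * p ≤ t • p) : t⁻¹ • p ≤ a⁻¹ʳ * p := by
  rw [← sub_nonneg, ringInverse_mul_sub_inv_smul ha.isUnit p ht.ne']
  exact smul_nonneg (inv_nonneg.2 ht.le) <| ha.ringInverse_mul_nonneg (sub_nonneg.2 h) <|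
    (hap.smul_right t).sub_right ((Commute.refl a).mul_right hap)

lemma ringInverse_mul_le_inv_smul {a p : A} (ha : IsStrictlyPositive a) (hap : Commute a p)
    {t : ℝ} (ht : 0 < t) (h : t • p ≤ a * p) : a⁻¹ʳ * p ≤ t⁻¹ • p := by
  rw [← sub_nonneg, ← neg_sub, ringInverse_mul_sub_inv_smul ha.isUnit p ht.ne', ← smul_neg,
    ← mul_neg, neg_sub]
  exact smul_nonneg (inv_nonneg.2 ht.le) <| ha.ringInverse_mul_nonneg (sub_nonneg.2 h) <|
    ((Commute.refl a).mul_right hap).sub_right (hap.smul_right t)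

lemma isStrictlyPositive_one_sub_sq {k : A} (hk : IsSelfAdjoint k) (hk1 : ‖k‖ < 1) :
    IsStrictlyPositive (1 - k ^ 2) := by
  have hsq : k ^ 2 ≤ algebraMap ℝ A (‖k‖ ^ 2) := by
    simpa only [hk.star_eq, sq] using CStarAlgebra.star_mul_le_algebraMap_norm_sq (a := k)
  have hpos : 0 < 1 - ‖k‖ ^ 2 := sub_pos.2 (pow_lt_one₀ (norm_nonneg k) hk1 two_ne_zero)
  refine (isStrictlyPositive_algebraMap (A := A) hpos).of_le ?_
  rw [map_sub, map_one]
  exact sub_le_sub_left hsq 1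

lemma IsSelfAdjoint.mul_le_norm_smul {k p : A} (hk : IsSelfAdjoint k) (hp : IsStarProjection p)
    (hkp : Commute k p) : k * p ≤ ‖k‖ • p := by
  have h := star_left_conjugate_le_conjugate hk.le_algebraMap_norm_self p
  rwa [hp.isSelfAdjoint.star_eq, hp.isIdempotentElem.mul_mul_eq_mul_of_commute hkp,
    hp.isIdempotentElem.mul_mul_eq_mul_of_commute (Algebra.commutes _ p),
    Algebra.algebraMap_eq_smul_one, smul_one_mul] at h

lemma le_norm_of_smul_le_mul {k p : A} (hk : IsSelfAdjoint k) (hp : IsStarProjection p)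
    (hp0 : p ≠ 0) (hkp : Commute k p) {s : ℝ} (h : s • p ≤ k * p) : s ≤ ‖k‖ := by
  by_contra! hlt
  have hle : (s - ‖k‖) • p ≤ 0 := by
    rw [sub_smul, sub_nonpos]
    exact h.trans (hk.mul_le_norm_smul hp hkp)
  exact hp0 (le_antisymm ((smul_nonpos_iff_nonpos_of_pos_left (sub_pos.2 hlt)).1 hle) hp.nonneg)

lemma sq_smul_le_sq_mul {k p : A} (hp : IsStarProjection p) (hkp : Commute k p) {s : ℝ}
    (hs : 0 ≤ s) (h : s • p ≤ k * p) : s ^ 2 • p ≤ k ^ 2 * p := by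
  have hsq : (k * p) ^ 2 - (s • p) ^ 2 = k ^ 2 * p - s ^ 2 • p := by
    rw [hkp.mul_pow, smul_pow, hp.isIdempotentElem.pow_eq two_ne_zero]
  set x := k * p
  set y := s • p
  have hy : 0 ≤ y := smul_nonneg hs hp.nonneg
  have hxy : Commute x y := (hkp.mul_left (Commute.refl p)).smul_right s
  rw [← sub_nonneg, ← hsq, hxy.sq_sub_sq]
  exact Commute.mul_nonneg (add_nonneg (hy.trans h) hy) (sub_nonneg.2 h)
    (((Commute.refl x).sub_right hxy).add_left (hxy.symm.sub_right (Commute.refl y)))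

lemma sq_mul_le_norm_sq_smul {k q : A} (hk : IsSelfAdjoint k) (hq : IsStarProjection q)
    (hkq : Commute k q) : k ^ 2 * q ≤ ‖q * k * q‖ ^ 2 • q := by
  have hrr : star (k * q) * (k * q) = k ^ 2 * q := by
    rw [star_mul, hk.star_eq, hq.isSelfAdjoint.star_eq, ← hkq.eq, ← sq, hkq.mul_pow,
      hq.isIdempotentElem.pow_eq two_ne_zero]
  have h := star_left_conjugate_le_conjugate
    (CStarAlgebra.star_mul_le_algebraMap_norm_sq (a := k * q)) q
  rwa [hq.isSelfAdjoint.star_eq, hrr,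
    hq.isIdempotentElem.mul_mul_eq_mul_of_commute ((hkq.pow_left 2).mul_left (Commute.refl q)),
    hq.isIdempotentElem.mul_mul_eq_mul_of_commute (Algebra.commutes _ q),
    Algebra.algebraMap_eq_smul_one, smul_one_mul, mul_assoc, hq.isIdempotentElem.eq,
    ← hq.isIdempotentElem.mul_mul_eq_mul_of_commute hkq] at h

lemma inv_one_sub_smul_le_mul_ringInverse_one_sub_sq_mul {k p : A} (hk : IsSelfAdjoint k)
    (hk1 : ‖k‖ < 1) (hp : IsIdempotentElem p) (hkp : Commute k p) {γ : ℝ} (hγ : γ < 1)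
    (h : γ • p ≤ k ^ 2 * p) : (1 - γ)⁻¹ • p ≤ p * (1 - k ^ 2)⁻¹ʳ * p := by
  have hap : Commute (1 - k ^ 2) p := (Commute.one_left p).sub_left (hkp.pow_left 2)
  rw [hp.mul_mul_eq_mul_of_commute hap.ringInverse_left]
  refine inv_smul_le_ringInverse_mul (isStrictlyPositive_one_sub_sq hk hk1) hap (sub_pos.2 hγ) ?_
  rw [sub_mul, one_mul, sub_smul, one_smul]
  exact sub_le_sub_left h p

lemma mul_ringInverse_one_sub_sq_mul_le_inv_one_sub_smul {k p : A} (hk : IsSelfAdjoint k)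
    (hk1 : ‖k‖ < 1) (hp : IsIdempotentElem p) (hkp : Commute k p) {δ : ℝ} (hδ : δ < 1)
    (h : k ^ 2 * p ≤ δ • p) : p * (1 - k ^ 2)⁻¹ʳ * p ≤ (1 - δ)⁻¹ • p := by
  have hap : Commute (1 - k ^ 2) p := (Commute.one_left p).sub_left (hkp.pow_left 2)
  rw [hp.mul_mul_eq_mul_of_commute hap.ringInverse_left]
  refine ringInverse_mul_le_inv_smul (isStrictlyPositive_one_sub_sq hk hk1) hap (sub_pos.2 hδ) ?_
  rw [sub_mul, one_mul, sub_smul, one_smul]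
  exact sub_le_sub_left h p

end CStarAlgebra

theorem stmt7_general (D : ℕ)
    (K P : Matrix (Fin D) (Fin D) ℂ)
    (hK : K.IsHermitian) (hKnorm : ‖K‖ < 1)
    (hPherm : P.IsHermitian) (hPproj : P * P = P) (hPne : P ≠ 0)
    (Γ Δ : ℝ) (hΓ : 0 ≤ Γ) (hΔ0 : 0 ≤ Δ) (hΔ1 : Δ < 1)
    (hcomm : K * P = P * K)
    (hGamma : (K * P - (Real.sqrt Γ : ℂ) • P).PosSemidef)
    (hDelta : ‖(1 - P) * K * (1 - P)‖ ≤ Real.sqrt Δ) :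
    Γ < 1 ∧
    (1 - K ^ 2)⁻¹ * P = P * (1 - K ^ 2)⁻¹ ∧
    (P * (1 - K ^ 2)⁻¹ * P - (((1 - Γ)⁻¹ : ℝ) : ℂ) • P).PosSemidef ∧
    ((((1 - Δ)⁻¹ : ℝ) : ℂ) • (1 - P) - (1 - P) * (1 - K ^ 2)⁻¹ * (1 - P)).PosSemidef := by
  have hkp : Commute K P := hcomm
  have hp : IsStarProjection P := ⟨hPproj, hPherm⟩
  have hkq : Commute K (1 - P) := (Commute.one_right K).sub_right hcomm
  have hΓP : √Γ • P ≤ K * P := by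
    rwa [Matrix.le_iff, ← Complex.coe_smul]
  have hΓ1 : Γ < 1 := by
    have := (le_norm_of_smul_le_mul hK hp hPne hkp hΓP).trans_lt hKnorm
    rwa [Real.sqrt_lt' one_pos, one_pow] at this
  have hΓK : Γ • P ≤ K ^ 2 * P := by
    simpa only [Real.sq_sqrt hΓ] using sq_smul_le_sq_mul hp hkp (Real.sqrt_nonneg Γ) hΓP
  have hΔK : K ^ 2 * (1 - P) ≤ Δ • (1 - P) := by
    refine (sq_mul_le_norm_sq_smul hK hp.one_sub hkq).trans
      (smul_le_smul_of_nonneg_right ?_ hp.one_sub.nonneg)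
    simpa only [Real.sq_sqrt hΔ0] using pow_le_pow_left₀ (norm_nonneg _) hDelta 2
  simp only [Matrix.nonsing_inv_eq_ringInverse, ← Matrix.le_iff, Complex.coe_smul]
  exact ⟨hΓ1, ((Commute.one_left P).sub_left (hkp.pow_left 2)).ringInverse_left.eq,
    inv_one_sub_smul_le_mul_ringInverse_one_sub_sq_mul hK hKnorm hPproj hkp hΓ1 hΓK,
    mul_ringInverse_one_sub_sq_mul_le_inv_one_sub_smul hK hKnorm hp.one_sub.isIdempotentElem hkq
      hΔ1 hΔK⟩

/-- Loewner-order bounds on the blocks of `(I - K²)⁻¹` for an AGSP `K`. -/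
theorem stmt7 (D : ℕ) (hD : 1 ≤ D)
    (K P : Matrix (Fin D) (Fin D) ℂ)
    (hK : K.IsHermitian) (hKnorm : ‖K‖ < 1)
    (hPherm : P.IsHermitian) (hPproj : P * P = P) (hPne : P ≠ 0)
    (Γ Δ : ℝ) (hΓ : 0 ≤ Γ) (hΔ0 : 0 ≤ Δ) (hΔ1 : Δ < 1)
    (hcomm : K * P = P * K)
    (hGamma : (K * P - (Real.sqrt Γ : ℂ) • P).PosSemidef)
    (hDelta : ‖(1 - P) * K * (1 - P)‖ ≤ Real.sqrt Δ) :
    Γ < 1 ∧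
    (1 - K ^ 2)⁻¹ * P = P * (1 - K ^ 2)⁻¹ ∧
    (P * (1 - K ^ 2)⁻¹ * P - (((1 - Γ)⁻¹ : ℝ) : ℂ) • P).PosSemidef ∧
    ((((1 - Δ)⁻¹ : ℝ) : ℂ) • (1 - P) - (1 - P) * (1 - K ^ 2)⁻¹ * (1 - P)).PosSemidef :=
  stmt7_general D K P hK hKnorm hPherm hPproj hPne Γ Δ hΓ hΔ0 hΔ1 hcomm hGamma hDelta
end

section
/- With the same hypotheses as in the product-AGSP lemma (for each t ∈ {1,…,n}: K_t Hermitian with ‖K_t‖ ≤ 1, Π_t an orthogonal projector, Γ_t, Δ_t ∈ [0,1], ε_t ≥ 0, K_tΠ_t = Π_tK_t, K_tΠ_t ≥ √Γ_t·Π_t, ‖(I−Π_t)K_t(I−Π_t)‖ ≤ √Δ_t, ‖Π_t − Π₀‖ ≤ ε_t; ρ a density matrix; K := K_n⋯K_1), set a := tr(ρΠ₀)·∏_{t=1}^n Γ_t − 2∑_{t=1}^n ε_t ∏_{s=t+1}^n Γ_s and b := tr(ρ(I−Π₀))·∏_{t=1}^n Δ_t + 2∑_{t=1}^n ε_t ∏_{s=t+1}^n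 Δ_s. If a > 0, then tr(K ρ K†) > 0 and the normalized state ρ_n := K ρ K† / tr(K ρ K†) satisfies tr(Π₀ ρ_n) ≥ 1 − b/a. -/
/-!
Follow the subnormalized states `σ_t = K_t ⋯ K_1 ρ K_1† ⋯ K_t†`. One step multiplies the weight
`tr(Π_t σ)` by at least `Γ_t`, because `K†Π K ≥ Γ Π` when `KΠ ≥ √Γ Π` commutes with `Π`, and the
weight `tr((1 - Π_t) σ)` by at most `Δ_t`, because `K†(1 - Π)K = Y†Y` with `Y = (1 - Π)K(1 - Π)`.
Replacing `Π_t` by `Π₀` before and after the step costs `2 ε_t`, since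
`|tr(Aσ) - tr(Bσ)| ≤ ‖A - B‖ tr σ`. Unrolling these affine recurrences gives
`f := tr(Π₀ σ_n) ≥ a` and `g := tr((1 - Π₀) σ_n) ≤ b`, so the normalized overlap
`f / (f + g) = 1 - g / (f + g)` is at least `1 - b / a`.
-/

open scoped Matrix Matrix.Norms.L2Operator ComplexOrder

section

open scoped MatrixOrder
open Finset

lemma mul_prod_sub_sum_le_of_succ {x c e : ℕ → ℝ} {n : ℕ} (hc : ∀ t ∈ range n, 0 ≤ c t)
    (h : ∀ t ∈ range n, c t * x t - e t ≤ x (t + 1)) :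
    x 0 * ∏ t ∈ range n, c t - ∑ t ∈ range n, e t * ∏ s ∈ Ico (t + 1) n, c s ≤ x n := by
  induction n with
  | zero => simp
  | succ n ih =>
    have hn : n ∈ range (n + 1) := self_mem_range_succ n
    have hsub : range n ⊆ range (n + 1) := range_subset_range.mpr n.le_succ
    have ih := ih (fun t ht => hc t (hsub ht)) fun t ht => h t (hsub ht)
    have hsum : ∑ t ∈ range n, e t * ∏ s ∈ Ico (t + 1) (n + 1), c s
        = c n * ∑ t ∈ range n, e t * ∏ s ∈ Ico (t + 1) n, c s := by
      rw [mul_sum]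
      refine sum_congr rfl fun t ht => ?_
      rw [prod_Ico_succ_top (mem_range.mp ht)]
      ring
    rw [prod_range_succ, sum_range_succ, hsum, Ico_self, prod_empty]
    nlinarith [mul_le_mul_of_nonneg_left ih (hc n hn), h n hn]

/-- `orderedProd K t = K (t - 1) * ⋯ * K 1 * K 0`. -/
def orderedProd {M : Type*} [Monoid M] (K : ℕ → M) (t : ℕ) : M :=
  ((List.ofFn fun i : Fin t => K i).reverse).prod

lemma orderedProd_zero {M : Type*} [Monoid M] (K : ℕ → M) : orderedProd K 0 = 1 := rfl

lemma orderedProd_succ {M : Type*} [Monoid M] (K : ℕ → M) (t : ℕ) :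
    orderedProd K (t + 1) = K t * orderedProd K t := by
  rw [orderedProd, orderedProd, List.ofFn_succ', List.concat_eq_append, List.reverse_append]
  simp [Fin.last]

namespace Matrix

variable {ι : Type*} [Fintype ι]

lemma PosSemidef.trace_re_nonneg {σ : Matrix ι ι ℂ} (hσ : σ.PosSemidef) : 0 ≤ σ.trace.re :=
  (Complex.nonneg_iff.mp hσ.trace_nonneg).1

lemma trace_ofReal_smul_mul_re (r : ℝ) (A σ : Matrix ι ι ℂ) :
    (((r : ℂ) • A) * σ).trace.re = r * (A * σ).trace.re := by
  rw [Matrix.smul_mul, trace_smul, smul_eq_mul, Complex.re_ofReal_mul]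

lemma trace_mul_conj (P K σ : Matrix ι ι ℂ) :
    (P * (K * σ * Kᴴ)).trace = (Kᴴ * P * K * σ).trace := by
  rw [← Matrix.mul_assoc, trace_mul_comm]
  simp only [Matrix.mul_assoc]

variable [DecidableEq ι]

lemma conj_orderedProd_succ (K : ℕ → Matrix ι ι ℂ) (ρ : Matrix ι ι ℂ) (t : ℕ) :
    orderedProd K (t + 1) * ρ * (orderedProd K (t + 1))ᴴ
      = K t * (orderedProd K t * ρ * (orderedProd K t)ᴴ) * (K t)ᴴ := by
  rw [orderedProd_succ, conjTranspose_mul]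
  simp only [Matrix.mul_assoc]

lemma PosSemidef.trace_mul_re_nonneg {A σ : Matrix ι ι ℂ} (hA : A.PosSemidef)
    (hσ : σ.PosSemidef) : 0 ≤ (A * σ).trace.re := by
  obtain ⟨X, rfl⟩ := CStarAlgebra.nonneg_iff_eq_star_mul_self.mp hσ.nonneg
  rw [star_eq_conjTranspose, ← Matrix.mul_assoc, trace_mul_comm]
  simpa only [Matrix.mul_assoc] using (hA.mul_mul_conjTranspose_same X).trace_re_nonneg

lemma trace_mul_re_mono {A B σ : Matrix ι ι ℂ} (hAB : A ≤ B) (hσ : σ.PosSemidef) :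
    (A * σ).trace.re ≤ (B * σ).trace.re := by
  have := (le_iff.mp hAB).trace_mul_re_nonneg hσ
  rwa [Matrix.sub_mul, trace_sub, Complex.sub_re, sub_nonneg] at this

lemma trace_algebraMap_mul_re (r : ℝ) (σ : Matrix ι ι ℂ) :
    (algebraMap ℝ (Matrix ι ι ℂ) r * σ).trace.re = r * σ.trace.re := by
  rw [Algebra.algebraMap_eq_smul_one, ← Complex.coe_smul, trace_ofReal_smul_mul_re, Matrix.one_mul]

lemma abs_trace_mul_re_sub_le {A B σ : Matrix ι ι ℂ} (hA : A.IsHermitian) (hB : B.IsHermitian)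
    (hσ : σ.PosSemidef) :
    |(A * σ).trace.re - (B * σ).trace.re| ≤ ‖A - B‖ * σ.trace.re := by
  have hAB : IsSelfAdjoint (A - B) := (hA.sub hB).isSelfAdjoint
  have hle := trace_mul_re_mono hAB.le_algebraMap_norm_self hσ
  have hge := trace_mul_re_mono hAB.neg_algebraMap_norm_le_self hσ
  rw [trace_algebraMap_mul_re, Matrix.sub_mul, trace_sub, Complex.sub_re] at hle
  rw [Matrix.neg_mul, trace_neg, Complex.neg_re, trace_algebraMap_mul_re, Matrix.sub_mul,
    trace_sub, Complex.sub_re] at hge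
  exact abs_le.mpr ⟨by linarith, hle⟩

lemma trace_conj_re_le {K σ : Matrix ι ι ℂ} (hK : ‖K‖ ≤ 1) (hσ : σ.PosSemidef) :
    (K * σ * Kᴴ).trace.re ≤ σ.trace.re := by
  have hle := trace_mul_re_mono (CStarAlgebra.star_mul_le_algebraMap_norm_sq (a := K)) hσ
  rw [trace_algebraMap_mul_re, star_eq_conjTranspose, ← trace_mul_cycle] at hle
  exact hle.trans (mul_le_of_le_one_left hσ.trace_re_nonneg (pow_le_one₀ (norm_nonneg K) hK))

lemma mul_trace_mul_re_le_trace_conj {K P σ : Matrix ι ι ℂ} (hP : IsStarProjection P)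
    (hKP : Commute K P) {c : ℝ} (hc : 0 ≤ c) (hcP : (c : ℂ) • P ≤ K * P)
    (hσ : σ.PosSemidef) :
    c ^ 2 * (P * σ).trace.re ≤ (P * (K * σ * Kᴴ)).trace.re := by
  set A := K * P - (c : ℂ) • P with hA_def
  have hA : A.PosSemidef := le_iff.mp hcP
  have hAP : A * P = A := by
    rw [hA_def, Matrix.sub_mul, Matrix.mul_assoc, hP.isIdempotentElem.eq, Matrix.smul_mul,
      hP.isIdempotentElem.eq]
  have hPA : P * A = A := by
    rw [hA_def, Matrix.mul_sub, Matrix.mul_smul, ← Matrix.mul_assoc, ← hKP.eq, Matrix.mul_assoc,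
      hP.isIdempotentElem.eq]
  have hPh : Pᴴ = P := hP.isSelfAdjoint
  -- `K†PK = (KP)†(KP)` with `KP = A + cP`, and `A` lives inside the range of `P`.
  have hconj : Kᴴ * P * K = Aᴴ * A + (2 * c : ℂ) • A + ((c ^ 2 : ℝ) : ℂ) • P := by
    calc Kᴴ * P * K = (P * K)ᴴ * (P * K) := by
          simp only [conjTranspose_mul, hPh, Matrix.mul_assoc]
          rw [← Matrix.mul_assoc P P, hP.isIdempotentElem.eq]
      _ = _ := by
          rw [← hKP.eq, ← sub_add_cancel (K * P) ((c : ℂ) • P), ← hA_def, conjTranspose_add,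
            conjTranspose_smul, hA.isHermitian.eq, hPh, Complex.star_def, Complex.conj_ofReal]
          simp only [Matrix.add_mul, Matrix.mul_add, Matrix.smul_mul, Matrix.mul_smul, hAP, hPA,
            hP.isIdempotentElem.eq]
          push_cast
          module
  have hle : ((c ^ 2 : ℝ) : ℂ) • P ≤ Kᴴ * P * K := by
    rw [le_iff, hconj, add_sub_cancel_right]
    exact (posSemidef_conjTranspose_mul_self A).add (hA.smul (by positivity))
  have := trace_mul_re_mono hle hσ
  rwa [trace_ofReal_smul_mul_re, ← trace_mul_conj] at this

lemma trace_conj_re_le_of_norm_le {K Q σ : Matrix ι ι ℂ} (hQ : IsStarProjection Q)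
    (hKQ : Commute K Q) {c : ℝ} (hc : ‖Q * K * Q‖ ≤ c) (hσ : σ.PosSemidef) :
    (Q * (K * σ * Kᴴ)).trace.re ≤ c ^ 2 * (Q * σ).trace.re := by
  have hQh : star Q = Q := hQ.isSelfAdjoint
  have hQQ : Q * Q = Q := hQ.isIdempotentElem.eq
  have hY : Q * K * Q = Q * K := by
    rw [Matrix.mul_assoc, hKQ.eq, ← Matrix.mul_assoc, hQQ]
  have hYY : star (Q * K * Q) * (Q * K * Q) = Kᴴ * Q * K := by
    rw [hY, star_mul, hQh, star_eq_conjTranspose, Matrix.mul_assoc, ← Matrix.mul_assoc Q, hQQ,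
      Matrix.mul_assoc]
  have hconjQ : Q * (star (Q * K * Q) * (Q * K * Q)) * Q = star (Q * K * Q) * (Q * K * Q) := by
    simp only [star_mul, hQh, Matrix.mul_assoc, hQQ]
    rw [← Matrix.mul_assoc Q Q, hQQ]
  -- `K†QK = Y†Y = Q(Y†Y)Q ≤ ‖Y‖² Q` for `Y = QKQ`.
  have hle : Kᴴ * Q * K ≤ algebraMap ℝ _ (‖Q * K * Q‖ ^ 2) * Q := by
    have := hQ.isSelfAdjoint.conjugate_le_conjugate
      (CStarAlgebra.star_mul_le_algebraMap_norm_sq (a := Q * K * Q))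
    rwa [hconjQ, hYY, ← Algebra.commutes, Matrix.mul_assoc (algebraMap ℝ _ _), hQQ] at this
  have := trace_mul_re_mono hle hσ
  rw [Matrix.mul_assoc (algebraMap ℝ _ _), trace_algebraMap_mul_re, ← trace_mul_conj] at this
  have hQσ := (nonneg_iff_posSemidef.mp hQ.nonneg).trace_mul_re_nonneg hσ
  exact this.trans (mul_le_mul_of_nonneg_right (pow_le_pow_left₀ (norm_nonneg _) hc 2) hQσ)

lemma sub_two_mul_le_trace_mul_re_of_le {A B σ σ' : Matrix ι ι ℂ} (hA : A.IsHermitian)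
    (hB : B.IsHermitian) (hσ : σ.PosSemidef ∧ σ.trace.re ≤ 1)
    (hσ' : σ'.PosSemidef ∧ σ'.trace.re ≤ 1) {γ ε : ℝ} (hγ : γ ∈ Set.Icc (0 : ℝ) 1)
    (hAB : ‖A - B‖ ≤ ε) (h : γ * (A * σ).trace.re ≤ (A * σ').trace.re) :
    γ * (B * σ).trace.re - 2 * ε ≤ (B * σ').trace.re := by
  have close {τ : Matrix ι ι ℂ} (hτ : τ.PosSemidef ∧ τ.trace.re ≤ 1) :
      |(A * τ).trace.re - (B * τ).trace.re| ≤ ε :=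
    (abs_trace_mul_re_sub_le hA hB hτ.1).trans
      ((mul_le_of_le_one_right (norm_nonneg _) hτ.2).trans hAB)
  have hε : 0 ≤ ε := (abs_nonneg _).trans (close hσ)
  obtain ⟨h₁, -⟩ := abs_le.mp (close hσ)
  obtain ⟨-, h₂⟩ := abs_le.mp (close hσ')
  nlinarith [mul_le_mul_of_nonneg_left h₁ hγ.1, mul_le_mul_of_nonneg_right hγ.2 hε]

lemma le_trace_mul_re_of_forall_le {n : ℕ} {A σ : ℕ → Matrix ι ι ℂ} {B : Matrix ι ι ℂ}
    {γ ε : ℕ → ℝ} (hA : ∀ t ∈ range n, (A t).IsHermitian) (hB : B.IsHermitian)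
    (hσ : ∀ t ≤ n, (σ t).PosSemidef ∧ (σ t).trace.re ≤ 1)
    (hγ : ∀ t ∈ range n, γ t ∈ Set.Icc (0 : ℝ) 1) (hAB : ∀ t ∈ range n, ‖A t - B‖ ≤ ε t)
    (hstep : ∀ t ∈ range n, γ t * (A t * σ t).trace.re ≤ (A t * σ (t + 1)).trace.re) :
    (B * σ 0).trace.re * ∏ t ∈ range n, γ t
        - 2 * ∑ t ∈ range n, ε t * ∏ s ∈ Ico (t + 1) n, γ s
      ≤ (B * σ n).trace.re := by
  rw [mul_sum]
  simp_rw [← mul_assoc]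
  refine mul_prod_sub_sum_le_of_succ (x := fun t => (B * σ t).trace.re) (e := fun t => 2 * ε t)
    (fun t ht => (hγ t ht).1) fun t ht => ?_
  have ht' := mem_range.mp ht
  exact sub_two_mul_le_trace_mul_re_of_le (hA t ht) hB (hσ t ht'.le) (hσ (t + 1) ht') (hγ t ht)
    (hAB t ht) (hstep t ht)

lemma trace_mul_re_le_of_forall_le {n : ℕ} {A σ : ℕ → Matrix ι ι ℂ} {B : Matrix ι ι ℂ}
    {γ ε : ℕ → ℝ} (hA : ∀ t ∈ range n, (A t).IsHermitian) (hB : B.IsHermitian)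
    (hσ : ∀ t ≤ n, (σ t).PosSemidef ∧ (σ t).trace.re ≤ 1)
    (hγ : ∀ t ∈ range n, γ t ∈ Set.Icc (0 : ℝ) 1) (hAB : ∀ t ∈ range n, ‖A t - B‖ ≤ ε t)
    (hstep : ∀ t ∈ range n, (A t * σ (t + 1)).trace.re ≤ γ t * (A t * σ t).trace.re) :
    (B * σ n).trace.re
      ≤ (B * σ 0).trace.re * ∏ t ∈ range n, γ t
        + 2 * ∑ t ∈ range n, ε t * ∏ s ∈ Ico (t + 1) n, γ s := by
  have := le_trace_mul_re_of_forall_le (A := fun t => -A t) (B := -B)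
    (fun t ht => (hA t ht).neg) hB.neg hσ hγ
    (fun t ht => by simpa only [neg_sub_neg, norm_sub_rev] using hAB t ht)
    (fun t ht => by
      simpa only [Matrix.neg_mul, trace_neg, Complex.neg_re, mul_neg, neg_le_neg_iff]
        using hstep t ht)
  simp only [trace_neg, Complex.neg_re, neg_mul] at this
  linarith

lemma trace_re_conj_orderedProd_le {n : ℕ} {K : ℕ → Matrix ι ι ℂ}
    (hK : ∀ t ∈ range n, ‖K t‖ ≤ 1) {ρ : Matrix ι ι ℂ} (hρ : ρ.PosSemidef) :
    ∀ t ≤ n, (orderedProd K t * ρ * (orderedProd K t)ᴴ).trace.re ≤ ρ.trace.re := by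
  intro t
  induction t with
  | zero => simp [orderedProd_zero]
  | succ t ih =>
    intro ht
    rw [conj_orderedProd_succ]
    exact (trace_conj_re_le (hK t (mem_range.mpr ht)) (hρ.mul_mul_conjTranspose_same _)).trans
      (ih (Nat.le_of_succ_le ht))

lemma one_sub_div_le_trace_mul_normalize {P σ : Matrix ι ι ℂ} (hP : IsStarProjection P)
    (hσ : σ.PosSemidef) {a b : ℝ} (ha : 0 < a) (hPσ : a ≤ (P * σ).trace.re)
    (hP'σ : ((1 - P) * σ).trace.re ≤ b) :
    0 < σ.trace.re ∧ 1 - b / a ≤ (P * (σ.trace.re⁻¹ • σ)).trace.re := by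
  have hg := (nonneg_iff_posSemidef.mp hP.one_sub_nonneg).trace_mul_re_nonneg hσ
  have hsum : (P * σ).trace.re + ((1 - P) * σ).trace.re = σ.trace.re := by
    rw [← Complex.add_re, ← trace_add, ← Matrix.add_mul, add_sub_cancel, Matrix.one_mul]
  have hpos : 0 < σ.trace.re := by linarith
  refine ⟨hpos, ?_⟩
  rw [Matrix.mul_smul, trace_smul, Complex.smul_re, smul_eq_mul, inv_mul_eq_div,
    le_div_iff₀ hpos, ← hsum]
  have hba : 0 ≤ b / a := div_nonneg (hg.trans hP'σ) ha.le
  have hb : b / a * a = b := div_mul_cancel₀ b ha.ne'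
  nlinarith [mul_le_mul_of_nonneg_left hPσ hba, mul_nonneg hba hg]

end Matrix

end

theorem stmt13_general (D : ℕ) (n : ℕ)
    (K P : ℕ → Matrix (Fin D) (Fin D) ℂ)
    (P₀ : Matrix (Fin D) (Fin D) ℂ)
    (Γ Δ ε : ℕ → ℝ)
    (hP₀herm : P₀.IsHermitian) (hP₀proj : P₀ * P₀ = P₀)
    (hKnorm : ∀ t ∈ Finset.range n, ‖K t‖ ≤ 1)
    (hPherm : ∀ t ∈ Finset.range n, (P t).IsHermitian)
    (hPproj : ∀ t ∈ Finset.range n, P t * P t = P t)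
    (hΓ : ∀ t ∈ Finset.range n, Γ t ∈ Set.Icc (0 : ℝ) 1)
    (hΔ : ∀ t ∈ Finset.range n, Δ t ∈ Set.Icc (0 : ℝ) 1)
    (hcomm : ∀ t ∈ Finset.range n, K t * P t = P t * K t)
    (hGamma : ∀ t ∈ Finset.range n, (K t * P t - (Real.sqrt (Γ t) : ℂ) • P t).PosSemidef)
    (hDelta : ∀ t ∈ Finset.range n, ‖(1 - P t) * K t * (1 - P t)‖ ≤ Real.sqrt (Δ t))
    (hPP₀ : ∀ t ∈ Finset.range n, ‖P t - P₀‖ ≤ ε t)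
    (ρ : Matrix (Fin D) (Fin D) ℂ) (hρ : ρ.PosSemidef) (hρtr : ρ.trace = 1)
    (a b : ℝ)
    (ha : a = (ρ * P₀).trace.re * (∏ t ∈ Finset.range n, Γ t) -
        2 * ∑ t ∈ Finset.range n, ε t * ∏ s ∈ Finset.Ico (t + 1) n, Γ s)
    (hb : b = (ρ * (1 - P₀)).trace.re * (∏ t ∈ Finset.range n, Δ t) +
        2 * ∑ t ∈ Finset.range n, ε t * ∏ s ∈ Finset.Ico (t + 1) n, Δ s)
    (hapos : 0 < a) :
    (let Kprod : Matrix (Fin D) (Fin D) ℂ := ((List.ofFn fun i : Fin n => K i).reverse).prod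
     0 < (Kprod * ρ * Kprodᴴ).trace.re ∧
       1 - b / a ≤
         (P₀ * (((Kprod * ρ * Kprodᴴ).trace.re)⁻¹ • (Kprod * ρ * Kprodᴴ))).trace.re) := by
  set σ : ℕ → Matrix (Fin D) (Fin D) ℂ := fun t => orderedProd K t * ρ * (orderedProd K t)ᴴ
  have hσ (t : ℕ) (ht : t ≤ n) : (σ t).PosSemidef ∧ (σ t).trace.re ≤ 1 :=
    ⟨hρ.mul_mul_conjTranspose_same _,
      by simpa [hρtr] using Matrix.trace_re_conj_orderedProd_le hKnorm hρ t ht⟩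
  have hσ_succ (t : ℕ) : σ (t + 1) = K t * σ t * (K t)ᴴ := Matrix.conj_orderedProd_succ K ρ t
  have hP (t : ℕ) (ht : t ∈ Finset.range n) : IsStarProjection (P t) := ⟨hPproj t ht, hPherm t ht⟩
  have hf := Matrix.le_trace_mul_re_of_forall_le hPherm hP₀herm hσ hΓ hPP₀ fun t ht => by
    rw [hσ_succ]
    simpa only [Real.sq_sqrt (hΓ t ht).1] using Matrix.mul_trace_mul_re_le_trace_conj (hP t ht)
      (hcomm t ht) (Real.sqrt_nonneg _) (hGamma t ht) (hσ t (Finset.mem_range_le ht)).1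
  have hg := Matrix.trace_mul_re_le_of_forall_le (A := fun t => 1 - P t) (B := 1 - P₀)
    (fun t ht => Matrix.isHermitian_one.sub (hPherm t ht)) (Matrix.isHermitian_one.sub hP₀herm) hσ hΔ
    (fun t ht => by simpa only [sub_sub_sub_cancel_left, norm_sub_rev] using hPP₀ t ht)
    fun t ht => by
      rw [hσ_succ]
      simpa only [Real.sq_sqrt (hΔ t ht).1] using Matrix.trace_conj_re_le_of_norm_le (hP t ht).one_sub
        ((Commute.one_right _).sub_right (hcomm t ht)) (hDelta t ht) (hσ t (Finset.mem_range_le ht)).1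
  have hσ₀ : σ 0 = ρ := by simp [σ, orderedProd_zero]
  rw [hσ₀, Matrix.trace_mul_comm P₀ ρ, ← ha] at hf
  rw [hσ₀, Matrix.trace_mul_comm (1 - P₀) ρ, ← hb] at hg
  exact Matrix.one_sub_div_le_trace_mul_normalize ⟨hP₀proj, hP₀herm⟩ (hσ n le_rfl).1 hapos hf hg

/-- Normalized-overlap bound for the product of time-dependent AGSPs: if
`a := tr(ρΠ₀)·∏Γ_t − 2∑ε_t∏_{s>t}Γ_s > 0` then the normalized state
`KρK†/tr(KρK†)` has ground-space overlap at least `1 − b/a`. -/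
theorem stmt13 (D : ℕ) (hD : 1 ≤ D) (n : ℕ) (hn : 1 ≤ n)
    (K P : ℕ → Matrix (Fin D) (Fin D) ℂ)
    (P₀ : Matrix (Fin D) (Fin D) ℂ)
    (Γ Δ ε : ℕ → ℝ)
    (hP₀herm : P₀.IsHermitian) (hP₀proj : P₀ * P₀ = P₀)
    (hKherm : ∀ t ∈ Finset.range n, (K t).IsHermitian)
    (hKnorm : ∀ t ∈ Finset.range n, ‖K t‖ ≤ 1)
    (hPherm : ∀ t ∈ Finset.range n, (P t).IsHermitian)
    (hPproj : ∀ t ∈ Finset.range n, P t * P t = P t)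
    (hΓ : ∀ t ∈ Finset.range n, Γ t ∈ Set.Icc (0 : ℝ) 1)
    (hΔ : ∀ t ∈ Finset.range n, Δ t ∈ Set.Icc (0 : ℝ) 1)
    (hε : ∀ t ∈ Finset.range n, 0 ≤ ε t)
    (hcomm : ∀ t ∈ Finset.range n, K t * P t = P t * K t)
    (hGamma : ∀ t ∈ Finset.range n, (K t * P t - (Real.sqrt (Γ t) : ℂ) • P t).PosSemidef)
    (hDelta : ∀ t ∈ Finset.range n, ‖(1 - P t) * K t * (1 - P t)‖ ≤ Real.sqrt (Δ t))
    (hPP₀ : ∀ t ∈ Finset.range n, ‖P t - P₀‖ ≤ ε t)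
    (ρ : Matrix (Fin D) (Fin D) ℂ) (hρ : ρ.PosSemidef) (hρtr : ρ.trace = 1)
    (a b : ℝ)
    (ha : a = (ρ * P₀).trace.re * (∏ t ∈ Finset.range n, Γ t) -
        2 * ∑ t ∈ Finset.range n, ε t * ∏ s ∈ Finset.Ico (t + 1) n, Γ s)
    (hb : b = (ρ * (1 - P₀)).trace.re * (∏ t ∈ Finset.range n, Δ t) +
        2 * ∑ t ∈ Finset.range n, ε t * ∏ s ∈ Finset.Ico (t + 1) n, Δ s)
    (hapos : 0 < a) :
    (let Kprod : Matrix (Fin D) (Fin D) ℂ := ((List.ofFn fun i : Fin n => K i).reverse).prod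
     0 < (Kprod * ρ * Kprodᴴ).trace.re ∧
       1 - b / a ≤
         (P₀ * (((Kprod * ρ * Kprodᴴ).trace.re)⁻¹ • (Kprod * ρ * Kprodᴴ))).trace.re) :=
  stmt13_general D n K P P₀ Γ Δ ε hP₀herm hP₀proj hKnorm hPherm hPproj hΓ hΔ hcomm hGamma hDelta
    hPP₀ ρ hρ hρtr a b ha hb hapos
end

section
/- For every real c with 0 < c < 1/2, the series ∑_{t=1}^∞ (1/t²)·∏_{s=1}^t (1 − c/s)^{−1} converges and is bounded above by e^{2c} · ∑_{t=1}^∞ t^{−2(1−c)} (the latter series equals the Riemann zeta value ζ(2(1−c)) and converges since 2(1−c) > 1). -/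
lemma aux_inv_le_exp {x : ℝ} (hx0 : 0 ≤ x) (hx : x ≤ 1 / 2) :
    (1 - x)⁻¹ ≤ Real.exp (2 * x) := by
  have h1 : 0 < 1 - x := by linarith
  rw [inv_eq_one_div, div_le_iff₀ h1]
  nlinarith [Real.add_one_le_exp (2 * x)]

lemma aux_sum_inv (n : ℕ) : ∑ s ∈ Finset.Icc 1 n, ((s : ℝ))⁻¹ = (harmonic n : ℝ) := by
  induction n with
  | zero => simp [harmonic]
  | succ n ih =>
      rw [Finset.sum_Icc_succ_top (Nat.le_add_left 1 n), ih, harmonic_succ]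
      push_cast; ring

lemma aux_prod_le (c : ℝ) (hc0 : 0 < c) (hc : c < 1 / 2) (n : ℕ) (hn : 0 < n) :
    ∏ s ∈ Finset.Icc 1 n, (1 - c / (s : ℝ))⁻¹ ≤
      Real.exp (2 * c) * (n : ℝ) ^ (2 * c : ℝ) := by
  have hstep : ∏ s ∈ Finset.Icc 1 n, (1 - c / (s : ℝ))⁻¹ ≤
      ∏ s ∈ Finset.Icc 1 n, Real.exp (2 * (c / (s : ℝ))) := by
    apply Finset.prod_le_prod
    · intro s hs
      have hs1 : 1 ≤ s := (Finset.mem_Icc.mp hs).1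
      have hspos : (0 : ℝ) < s := by exact_mod_cast hs1
      have hs1' : (1 : ℝ) ≤ s := by exact_mod_cast hs1
      have : c / (s : ℝ) ≤ c := by
        rw [div_le_iff₀ hspos]; nlinarith
      have h1 : 0 < 1 - c / (s : ℝ) := by
        have h0 : 0 ≤ c / (s : ℝ) := div_nonneg hc0.le hspos.le
        linarith
      positivity
    · intro s hs
      have hs1 : 1 ≤ s := (Finset.mem_Icc.mp hs).1
      have hspos : (0 : ℝ) < s := by exact_mod_cast hs1
      have hle : c / (s : ℝ) ≤ 1 / 2 := by
        rw [div_le_iff₀ hspos]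
        have : (1 : ℝ) ≤ s := by exact_mod_cast hs1
        nlinarith
      exact aux_inv_le_exp (div_nonneg hc0.le hspos.le) hle
  refine hstep.trans ?_
  rw [← Real.exp_sum]
  have hsum : ∑ s ∈ Finset.Icc 1 n, 2 * (c / (s : ℝ)) =
      2 * c * ∑ s ∈ Finset.Icc 1 n, ((s : ℝ))⁻¹ := by
    rw [Finset.mul_sum]; apply Finset.sum_congr rfl; intro s _; ring
  rw [hsum, aux_sum_inv]
  have hH : (harmonic n : ℝ) ≤ 1 + Real.log n := harmonic_le_one_add_log n
  have h2c : (0 : ℝ) ≤ 2 * c := by linarith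
  calc Real.exp (2 * c * (harmonic n : ℝ))
      ≤ Real.exp (2 * c * (1 + Real.log n)) := by
        apply Real.exp_le_exp.mpr
        exact mul_le_mul_of_nonneg_left hH h2c
    _ = Real.exp (2 * c) * (n : ℝ) ^ (2 * c : ℝ) := by
        rw [mul_add, Real.exp_add, mul_one]
        congr 1
        rw [Real.rpow_def_of_pos (by exact_mod_cast hn)]
        ring_nf

lemma aux_term_le (c : ℝ) (hc0 : 0 < c) (hc : c < 1 / 2) (t : ℕ) :
    (1 : ℝ) / ((t : ℝ) + 1) ^ 2 * ∏ s ∈ Finset.Icc 1 (t + 1), (1 - c / (s : ℝ))⁻¹ ≤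
      Real.exp (2 * c) * ((t : ℝ) + 1) ^ (-(2 * (1 - c))) := by
  have hnpos : (0 : ℝ) < (t : ℝ) + 1 := by positivity
  have hprod := aux_prod_le c hc0 hc (t + 1) t.succ_pos
  have hcast : ((t + 1 : ℕ) : ℝ) = (t : ℝ) + 1 := by push_cast; ring
  rw [hcast] at hprod
  have h2 : (0 : ℝ) < ((t : ℝ) + 1) ^ 2 := by positivity
  have hprodnn : 0 ≤ ∏ s ∈ Finset.Icc 1 (t + 1), (1 - c / (s : ℝ))⁻¹ := by
    apply Finset.prod_nonneg
    intro s hs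
    have hs1 : 1 ≤ s := (Finset.mem_Icc.mp hs).1
    have hspos : (0 : ℝ) < s := by exact_mod_cast hs1
    have hle : c / (s : ℝ) ≤ c := by
      rw [div_le_iff₀ hspos]
      have : (1 : ℝ) ≤ s := by exact_mod_cast hs1
      nlinarith
    have : 0 < 1 - c / (s : ℝ) := by linarith
    positivity
  calc (1 : ℝ) / ((t : ℝ) + 1) ^ 2 * ∏ s ∈ Finset.Icc 1 (t + 1), (1 - c / (s : ℝ))⁻¹
      ≤ (1 : ℝ) / ((t : ℝ) + 1) ^ 2 * (Real.exp (2 * c) * ((t : ℝ) + 1) ^ (2 * c : ℝ)) := by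
        apply mul_le_mul_of_nonneg_left hprod (by positivity)
    _ = Real.exp (2 * c) * ((t : ℝ) + 1) ^ (-(2 * (1 - c))) := by
        have : ((t : ℝ) + 1) ^ (-(2 * (1 - c))) =
            ((t : ℝ) + 1) ^ (2 * c : ℝ) / ((t : ℝ) + 1) ^ 2 := by
          rw [show (-(2 * (1 - c)) : ℝ) = 2 * c - 2 by ring,
            Real.rpow_sub hnpos]
          norm_num [Real.rpow_two]
        rw [this]; ring

/-- For `0 < c < 1/2` the series `∑_{t≥1} t⁻² ∏_{s=1}^t (1 - c/s)⁻¹` converges and is bounded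
above by `e^{2c} ζ(2(1-c))`, where the zeta series `∑_{t≥1} t^{-2(1-c)}` also converges. -/
theorem stmt14 (c : ℝ) (hc0 : 0 < c) (hc : c < 1 / 2) :
    Summable (fun t : ℕ =>
      (1 : ℝ) / ((t : ℝ) + 1) ^ 2 * ∏ s ∈ Finset.Icc 1 (t + 1), (1 - c / (s : ℝ))⁻¹) ∧
    Summable (fun t : ℕ => ((t : ℝ) + 1) ^ (-(2 * (1 - c)))) ∧
    ∑' t : ℕ, (1 : ℝ) / ((t : ℝ) + 1) ^ 2 * ∏ s ∈ Finset.Icc 1 (t + 1), (1 - c / (s : ℝ))⁻¹ ≤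
      Real.exp (2 * c) * ∑' t : ℕ, ((t : ℝ) + 1) ^ (-(2 * (1 - c))) := by
  have hzeta : Summable (fun t : ℕ => ((t : ℝ) + 1) ^ (-(2 * (1 - c)))) := by
    have hbase : Summable (fun n : ℕ => (n : ℝ) ^ (-(2 * (1 - c)))) :=
      Real.summable_nat_rpow.mpr (by linarith)
    have := (summable_nat_add_iff 1).mpr hbase
    simpa [Nat.cast_add] using this
  have hterm := aux_term_le c hc0 hc
  have hnonneg : ∀ t : ℕ,
      0 ≤ (1 : ℝ) / ((t : ℝ) + 1) ^ 2 * ∏ s ∈ Finset.Icc 1 (t + 1), (1 - c / (s : ℝ))⁻¹ := by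
    intro t
    apply mul_nonneg (by positivity)
    apply Finset.prod_nonneg
    intro s hs
    have hs1 : 1 ≤ s := (Finset.mem_Icc.mp hs).1
    have hspos : (0 : ℝ) < s := by exact_mod_cast hs1
    have hle : c / (s : ℝ) ≤ c := by
      rw [div_le_iff₀ hspos]
      have : (1 : ℝ) ≤ s := by exact_mod_cast hs1
      nlinarith
    have : 0 < 1 - c / (s : ℝ) := by linarith
    positivity
  have hls : Summable (fun t : ℕ =>
      (1 : ℝ) / ((t : ℝ) + 1) ^ 2 * ∏ s ∈ Finset.Icc 1 (t + 1), (1 - c / (s : ℝ))⁻¹) :=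
    Summable.of_nonneg_of_le hnonneg hterm (hzeta.mul_left (Real.exp (2 * c)))
  refine ⟨hls, hzeta, ?_⟩
  rw [← tsum_mul_left]
  exact Summable.tsum_le_tsum hterm hls (hzeta.mul_left (Real.exp (2 * c)))
end

section
/- Let K be a Hermitian D×D complex matrix with ‖K‖ ≤ 1, let Π and Π₀ be orthogonal projectors with N := tr Π > 0, and let reals Γ, Δ, ε with 0 ≤ Δ ≤ Γ ≤ 1, Δ < 1 and ε ≥ 0 satisfy KΠ = ΠK, KΠ ≥ √Γ·Π in the Loewner order, ‖(I−Π)K(I−Π)‖ ≤ √Δ, and ‖Π − Π₀‖ ≤ ε. Define the map 𝓔(σ) := KσK + (1 − tr(KσK))·I/D, and let 𝓔' be any function from density matrices to matrices such that |tr(Π(𝓔'(σ) − 𝓔(σ)))| ≤ δ for every density matrix σ, where δ ≥ 0. Suppose ρ' is a density matrix with 𝓔'(ρ') = ρ', and suppose (Γ−Δ) + (D/N)(1−Γ) > 0. Then tr(Π ρ') ≥ (1 − Δ − (D/N)·δ)/((Γ−Δ) + (D/N)(1−Γ)), and consequently tr(Π₀ ρ') ≥ (1 − Δ − (D/N)·δ)/((Γ−Δ)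 + (D/N)(1−Γ)) − ε. -/
open scoped Matrix.Norms.L2Operator ComplexOrder

/-!
With `p = tr(Πρ')`, `a = tr((KΠ)²ρ')` and `b = tr((K(1-Π))²ρ')`, the operator inequalities
`Γ·Π ≤ (KΠ)²` (square the hypothesis `√Γ·Π ≤ KΠ`, legitimate as `KΠ` commutes with `Π`) and
`(K(1-Π))² ≤ Δ·(1-Π)` give `Γ p ≤ a` and `b ≤ Δ (1 - p)`. Since `tr(Kρ'K) = a + b`, comparing
`tr(Πρ')` with `tr(Π 𝓔(ρ'))` turns the fixed-point equation into `p ≥ a + (1 - a - b) N/D - δ`;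
eliminating `a` and `b` (using `N ≤ D`) bounds `p`, and `Π₀ ≥ Π - ε` transfers the bound to `Π₀`.
-/

section Ring

variable {R : Type*} [Ring R] {k p : R}

lemma IsIdempotentElem.mul_mul_eq_of_commute (hp : IsIdempotentElem p) (hkp : Commute k p) :
    p * k * p = k * p := by
  rw [← hkp.eq, mul_assoc, hp.eq]

lemma IsIdempotentElem.mul_mul_self_eq_of_commute (hp : IsIdempotentElem p)
    (hkp : Commute k p) : k * p * (k * p) = k * k * p := by
  rw [← mul_assoc, mul_assoc k p k, ← hkp.eq, ← mul_assoc, mul_assoc, hp.eq]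

lemma IsIdempotentElem.mul_self_eq_add_of_commute (hp : IsIdempotentElem p)
    (hkp : Commute k p) : k * k = k * p * (k * p) + k * (1 - p) * (k * (1 - p)) := by
  rw [hp.mul_mul_self_eq_of_commute hkp,
    hp.one_sub.mul_mul_self_eq_of_commute ((Commute.one_right k).sub_right hkp), ← mul_add,
    add_sub_cancel, mul_one]

end Ring

section CStarAlgebra

variable {A : Type*} [CStarAlgebra A] [PartialOrder A] [StarOrderedRing A] {p k x : A}

lemma IsStarProjection.sq_smul_le_mul_self (hp : IsStarProjection p) (hk : IsSelfAdjoint k)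
    (hkp : Commute k p) {c : ℝ} (hc : 0 ≤ c) (h : c • p ≤ k * p) :
    c ^ 2 • p ≤ k * p * (k * p) := by
  set y := k * p - c • p with hy
  have hy_sa : IsSelfAdjoint y :=
    ((hk.commute_iff hp.isSelfAdjoint).mp hkp).sub ((IsSelfAdjoint.all c).smul hp.isSelfAdjoint)
  have hpkp : p * (k * p) = k * p := by
    rw [← mul_assoc, hp.isIdempotentElem.mul_mul_eq_of_commute hkp]
  have hkpp : k * p * p = k * p := by rw [mul_assoc, hp.isIdempotentElem.eq]
  have hid : k * p * (k * p) - c ^ 2 • p = y * y + (2 * c) • y := by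
    simp only [hy, mul_sub, sub_mul, smul_mul_assoc, mul_smul_comm, hpkp, hkpp,
      hp.isIdempotentElem.eq]
    module
  rw [← sub_nonneg, hid]
  refine add_nonneg ?_ (smul_nonneg (by positivity) (sub_nonneg.mpr h))
  simpa only [hy_sa.star_eq] using star_mul_self_nonneg y

lemma IsStarProjection.star_mul_self_le_of_norm_le (hp : IsStarProjection p) (hxp : x * p = x)
    {r : ℝ} (hx : ‖x‖ ≤ r) : star x * x ≤ r ^ 2 • p := by
  have hcompress : p * (star x * x) * p = star x * x := by
    conv_rhs => rw [← hxp, star_mul, hp.isSelfAdjoint.star_eq]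
    rw [mul_assoc, mul_assoc, hxp, ← mul_assoc]
  have hle : star x * x ≤ algebraMap ℝ A (r ^ 2) :=
    CStarAlgebra.star_mul_le_algebraMap_norm_sq.trans
      (algebraMap_mono A (pow_le_pow_left₀ (norm_nonneg x) hx 2))
  calc star x * x = p * (star x * x) * p := hcompress.symm
    _ ≤ p * algebraMap ℝ A (r ^ 2) * p := hp.isSelfAdjoint.conjugate_le_conjugate hle
    _ = r ^ 2 • p := by
      rw [Algebra.algebraMap_eq_smul_one, mul_smul_comm, mul_one, smul_mul_assoc,
        hp.isIdempotentElem.eq]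

lemma IsSelfAdjoint.le_smul_one_of_norm_le (hx : IsSelfAdjoint x) {r : ℝ} (h : ‖x‖ ≤ r) :
    x ≤ r • (1 : A) := by
  rw [← Algebra.algebraMap_eq_smul_one]
  exact hx.le_algebraMap_norm_self.trans (algebraMap_mono A h)

end CStarAlgebra

open scoped MatrixOrder

namespace Matrix

variable {n : Type*} [Fintype n]

lemma IsHermitian.ofReal_re_trace {A : Matrix n n ℂ} (hA : A.IsHermitian) :
    (A.trace.re : ℂ) = A.trace :=
  Complex.conj_eq_iff_re.mp (by rw [← Complex.star_def, ← trace_conjTranspose, hA.eq])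

variable [DecidableEq n]

lemma PosSemidef.trace_mul_nonneg {A B : Matrix n n ℂ} (hA : A.PosSemidef) (hB : B.PosSemidef) :
    0 ≤ (A * B).trace := by
  obtain ⟨C, rfl⟩ := CStarAlgebra.nonneg_iff_eq_star_mul_self.mp hA.nonneg
  rw [Matrix.mul_assoc, Matrix.trace_mul_comm]
  exact (hB.mul_mul_conjTranspose_same C).trace_nonneg

lemma PosSemidef.re_trace_mul_le_of_le {A B ρ : Matrix n n ℂ}
    (hρ : ρ.PosSemidef) (hAB : A ≤ B) : (A * ρ).trace.re ≤ (B * ρ).trace.re := by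
  have h := (Complex.nonneg_iff.mp ((le_iff.mp hAB).trace_mul_nonneg hρ)).1
  rw [Matrix.sub_mul, trace_sub, Complex.sub_re] at h
  linarith

lemma re_trace_proj_mul_dissipative {K P : Matrix n n ℂ} (hP : IsStarProjection P)
    (hKP : Commute K P) (ρ : Matrix n n ℂ) (D : ℕ) :
    (P * (K * ρ * K + (1 - (K * ρ * K).trace) • ((D : ℂ)⁻¹ • (1 : Matrix n n ℂ)))).trace.re =
      (K * P * (K * P) * ρ).trace.re + (1 - (K * K * ρ).trace.re) * (P.trace.re / D) := by
  have hKPK : K * P * K = K * P * (K * P) := by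
    rw [hP.isIdempotentElem.mul_mul_self_eq_of_commute hKP, Matrix.mul_assoc, ← hKP.eq,
      ← Matrix.mul_assoc]
  have hconj : (P * (K * ρ * K)).trace = (K * P * (K * P) * ρ).trace := by
    rw [← hKPK, ← Matrix.mul_assoc, ← Matrix.mul_assoc, trace_mul_comm, ← Matrix.mul_assoc,
      ← Matrix.mul_assoc]
  have hKK : (K * ρ * K).trace = (K * K * ρ).trace := by
    rw [trace_mul_comm, ← Matrix.mul_assoc]
  have hscalar : (D : ℂ)⁻¹ * P.trace = ((P.trace.re / D : ℝ) : ℂ) := by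
    push_cast
    rw [IsHermitian.ofReal_re_trace hP.isSelfAdjoint]
    ring
  rw [Matrix.mul_add, trace_add, hconj, mul_smul_comm, mul_smul_comm, Matrix.mul_one,
    trace_smul, trace_smul, smul_eq_mul, smul_eq_mul, hscalar, Complex.add_re,
    Complex.re_mul_ofReal, Complex.sub_re, Complex.one_re, hKK]

end Matrix

lemma div_le_of_fixed_point_ineq {p a b t Γ Δ δ : ℝ} (ht : 1 ≤ t) (hΓa : Γ * p ≤ a)
    (hb : b ≤ Δ * (1 - p)) (hfix : a + (1 - (a + b)) / t - δ ≤ p)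
    (hden : 0 < (Γ - Δ) + t * (1 - Γ)) :
    (1 - Δ - t * δ) / ((Γ - Δ) + t * (1 - Γ)) ≤ p := by
  have ht0 : 0 < t := one_pos.trans_le ht
  rw [div_le_iff₀ hden]
  have hfix' : a * t + (1 - (a + b)) - δ * t ≤ p * t := by
    have hexpand : (a + (1 - (a + b)) / t - δ) * t = a * t + (1 - (a + b)) - δ * t := by
      field_simp
    linarith [mul_le_mul_of_nonneg_right hfix ht0.le]
  nlinarith [mul_le_mul_of_nonneg_right hΓa (sub_nonneg.mpr ht)]

theorem stmt15_general (D : ℕ)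
    (K P P₀ : Matrix (Fin D) (Fin D) ℂ)
    (Γ Δ ε : ℝ) (hΔ0 : 0 ≤ Δ) (hΔΓ : Δ ≤ Γ)
    (hK : K.IsHermitian)
    (hPherm : P.IsHermitian) (hPproj : P * P = P)
    (hP₀herm : P₀.IsHermitian)
    (hN : 0 < P.trace.re)
    (hcomm : K * P = P * K)
    (hGamma : (K * P - (Real.sqrt Γ : ℂ) • P).PosSemidef)
    (hDelta : ‖(1 - P) * K * (1 - P)‖ ≤ Real.sqrt Δ)
    (hPP₀ : ‖P - P₀‖ ≤ ε)
    (E' : Matrix (Fin D) (Fin D) ℂ → Matrix (Fin D) (Fin D) ℂ)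
    (δ : ℝ)
    (hE' : ∀ σ : Matrix (Fin D) (Fin D) ℂ, σ.PosSemidef → σ.trace = 1 →
      ‖(P * (E' σ - (K * σ * K +
        (1 - (K * σ * K).trace) • ((D : ℂ)⁻¹ • (1 : Matrix (Fin D) (Fin D) ℂ))))).trace‖ ≤ δ)
    (ρ' : Matrix (Fin D) (Fin D) ℂ) (hρ' : ρ'.PosSemidef) (hρ'tr : ρ'.trace = 1)
    (hfix : E' ρ' = ρ')
    (hdenom : 0 < (Γ - Δ) + ((D : ℝ) / P.trace.re) * (1 - Γ)) :
    (1 - Δ - ((D : ℝ) / P.trace.re) * δ) / ((Γ - Δ) + ((D : ℝ) / P.trace.re) * (1 - Γ)) ≤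
        (P * ρ').trace.re ∧
      (1 - Δ - ((D : ℝ) / P.trace.re) * δ) / ((Γ - Δ) + ((D : ℝ) / P.trace.re) * (1 - Γ)) - ε ≤
        (P₀ * ρ').trace.re := by
  have hP : IsStarProjection P := ⟨hPproj, hPherm⟩
  have hQ : IsStarProjection (1 - P) := hP.one_sub
  have hKQ : Commute K (1 - P) := (Commute.one_right K).sub_right hcomm
  set p := (P * ρ').trace.re
  set a := (K * P * (K * P) * ρ').trace.re
  set b := (K * (1 - P) * (K * (1 - P)) * ρ').trace.re
  have hlow : Γ * p ≤ a := by
    have h := hP.sq_smul_le_mul_self hK hcomm (Real.sqrt_nonneg Γ)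
      (by rwa [Matrix.le_iff, ← Complex.coe_smul])
    rw [Real.sq_sqrt (hΔ0.trans hΔΓ)] at h
    simpa using hρ'.re_trace_mul_le_of_le h
  have hup : b ≤ Δ * (1 - p) := by
    have hnorm : ‖K * (1 - P)‖ ≤ Real.sqrt Δ := by
      rwa [← hQ.isIdempotentElem.mul_mul_eq_of_commute hKQ]
    have h := hQ.star_mul_self_le_of_norm_le (by rw [mul_assoc, hQ.isIdempotentElem.eq]) hnorm
    rw [Real.sq_sqrt hΔ0, star_mul, hQ.isSelfAdjoint.star_eq, IsSelfAdjoint.star_eq hK,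
      ← hKQ.eq] at h
    simpa [Matrix.sub_mul, hρ'tr] using hρ'.re_trace_mul_le_of_le h
  have hdim : 1 ≤ (D : ℝ) / P.trace.re := by
    rw [one_le_div hN]
    simpa using Matrix.PosSemidef.one.re_trace_mul_le_of_le hP.le_one
  have hfixed : a + (1 - (a + b)) / ((D : ℝ) / P.trace.re) - δ ≤ p := by
    have h := (Complex.abs_re_le_norm _).trans (hfix ▸ hE' ρ' hρ' hρ'tr)
    rw [Matrix.mul_sub, Matrix.trace_sub, Complex.sub_re,
      Matrix.re_trace_proj_mul_dissipative hP hcomm,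
      hP.isIdempotentElem.mul_self_eq_add_of_commute hcomm, Matrix.add_mul, Matrix.trace_add,
      Complex.add_re] at h
    rw [div_div_eq_mul_div, mul_div_assoc]
    linarith [(abs_le.mp h).1]
  have hP₀ : p ≤ ε + (P₀ * ρ').trace.re := by
    simpa [Matrix.sub_mul, hρ'tr] using hρ'.re_trace_mul_le_of_le
      (IsSelfAdjoint.le_smul_one_of_norm_le (hPherm.sub hP₀herm) hPP₀)
  have hbound := div_le_of_fixed_point_ineq hdim hlow hup hfixed hdenom
  exact ⟨hbound, by linarith⟩

/-- Fault-resilience of the fixed-point process: a perturbed implementation `𝓔'` whose output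
differs from `𝓔(σ) = KσK + (1 - tr(KσK))·I/D` by at most `δ` (measured against `Π` on every
density matrix) still has fixed points with high ground-space overlap. -/
theorem stmt15 (D : ℕ) (hD : 1 ≤ D)
    (K P P₀ : Matrix (Fin D) (Fin D) ℂ)
    (Γ Δ ε : ℝ) (hΔ0 : 0 ≤ Δ) (hΔΓ : Δ ≤ Γ) (hΓ1 : Γ ≤ 1) (hΔ1 : Δ < 1) (hε : 0 ≤ ε)
    (hK : K.IsHermitian) (hKnorm : ‖K‖ ≤ 1)
    (hPherm : P.IsHermitian) (hPproj : P * P = P)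
    (hP₀herm : P₀.IsHermitian) (hP₀proj : P₀ * P₀ = P₀)
    (hN : 0 < P.trace.re)
    (hcomm : K * P = P * K)
    (hGamma : (K * P - (Real.sqrt Γ : ℂ) • P).PosSemidef)
    (hDelta : ‖(1 - P) * K * (1 - P)‖ ≤ Real.sqrt Δ)
    (hPP₀ : ‖P - P₀‖ ≤ ε)
    (E' : Matrix (Fin D) (Fin D) ℂ → Matrix (Fin D) (Fin D) ℂ)
    (δ : ℝ) (hδ : 0 ≤ δ)
    (hE' : ∀ σ : Matrix (Fin D) (Fin D) ℂ, σ.PosSemidef → σ.trace = 1 →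
      ‖(P * (E' σ - (K * σ * K +
        (1 - (K * σ * K).trace) • ((D : ℂ)⁻¹ • (1 : Matrix (Fin D) (Fin D) ℂ))))).trace‖ ≤ δ)
    (ρ' : Matrix (Fin D) (Fin D) ℂ) (hρ' : ρ'.PosSemidef) (hρ'tr : ρ'.trace = 1)
    (hfix : E' ρ' = ρ')
    (hdenom : 0 < (Γ - Δ) + ((D : ℝ) / P.trace.re) * (1 - Γ)) :
    (1 - Δ - ((D : ℝ) / P.trace.re) * δ) / ((Γ - Δ) + ((D : ℝ) / P.trace.re) * (1 - Γ)) ≤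
        (P * ρ').trace.re ∧
      (1 - Δ - ((D : ℝ) / P.trace.re) * δ) / ((Γ - Δ) + ((D : ℝ) / P.trace.re) * (1 - Γ)) - ε ≤
        (P₀ * ρ').trace.re :=
  stmt15_general D K P P₀ Γ Δ ε hΔ0 hΔΓ hK hPherm hPproj hP₀herm hN hcomm hGamma hDelta hPP₀ E' δ
    hE' ρ' hρ' hρ'tr hfix hdenom
end

section
/- Let K be a Hermitian D×D complex matrix with ‖K‖ ≤ 1, let Π be an orthogonal projector with N := tr Π, and let reals Γ, Δ ≥ 0 satisfy KΠ = ΠK, KΠ ≥ √Γ·Π in the Loewner order, and ‖(I−Π)K(I−Π)‖ ≤ √Δ. Then for every natural number n, N·Γⁿ ≤ tr(K^{2n}) ≤ N + Δⁿ·(D − N). -/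
/-!
Since `K` commutes with `Π`, the matrix `K^{2n}` splits as `K^{2n} Π + K^{2n} (1 - Π)`, a sum of
two commuting positive parts. Powers are monotone on commuting positive elements of a
C⋆-algebra, so `K Π ≥ √Γ Π ≥ 0` gives `K^{2n} Π ≥ Γⁿ Π`. On the other hand `‖K‖ ≤ 1` gives
`K^{2n} Π ≤ Π`, and `K^{2n} (1 - Π) = (K (1 - Π))^{2n} (1 - Π) ≤ Δⁿ (1 - Π)` because
`‖K (1 - Π)‖ ≤ √Δ`. Both bounds hold in the Loewner order, and taking traces proves the theorem.
-/

open scoped Matrix.Norms.L2Operator ComplexOrder MatrixOrder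

theorem Commute.mul_pow_mul_of_isIdempotentElem {M : Type*} [Monoid M] {a p : M}
    (h : Commute a p) (hp : IsIdempotentElem p) (k : ℕ) : (a * p) ^ k * p = a ^ k * p := by
  rw [h.mul_pow, mul_assoc, ← pow_succ, hp.pow_succ_eq]

section CStarAlgebra

variable {A : Type*} [CStarAlgebra A] [PartialOrder A] [StarOrderedRing A]

theorem Commute.pow_le_pow_left {a b : A} (hb : 0 ≤ b) (hba : b ≤ a) (h : Commute a b)
    (k : ℕ) : b ^ k ≤ a ^ k := by
  induction k with
  | zero => simp
  | succ k ih =>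
    have hdiff : a ^ (k + 1) - b ^ (k + 1) = a ^ k * (a - b) + (a ^ k - b ^ k) * b := by
      rw [pow_succ, pow_succ]; noncomm_ring
    rw [← sub_nonneg, hdiff]
    refine add_nonneg (Commute.mul_nonneg (CStarAlgebra.pow_nonneg (hb.trans hba) k)
      (sub_nonneg.2 hba) ?_) (Commute.mul_nonneg (sub_nonneg.2 ih) hb ?_)
    · exact ((Commute.refl a).pow_left k).sub_right (h.pow_left k)
    · exact (h.pow_left k).sub_left ((Commute.refl b).pow_left k)

theorem IsSelfAdjoint.pow_two_mul_le_algebraMap {a : A} (ha : IsSelfAdjoint a) {r : ℝ}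
    (hr : ‖a‖ ≤ r) (k : ℕ) : a ^ (2 * k) ≤ algebraMap ℝ A (r ^ (2 * k)) := by
  have hsq : a ^ 2 ≤ algebraMap ℝ A (r ^ 2) :=
    calc a ^ 2 = star a * a := by rw [ha.star_eq, sq]
      _ ≤ algebraMap ℝ A (‖a‖ ^ 2) := CStarAlgebra.star_mul_le_algebraMap_norm_sq
      _ ≤ algebraMap ℝ A (r ^ 2) := by gcongr
  rw [pow_mul, pow_mul, map_pow]
  exact Commute.pow_le_pow_left (sq a ▸ ha.mul_self_nonneg) hsq (Algebra.commutes _ _) k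

namespace IsStarProjection

variable {p : A}

theorem mul_le_mul_right_of_commute (hp : IsStarProjection p) {x y : A} (hxy : x ≤ y)
    (hx : Commute x p) (hy : Commute y p) : x * p ≤ y * p := by
  have h := star_left_conjugate_le_conjugate hxy p
  rwa [hp.isSelfAdjoint.star_eq, ← hx.eq, ← hy.eq, mul_assoc, mul_assoc,
    hp.isIdempotentElem.eq] at h

theorem smul_pow_le_pow_mul (hp : IsStarProjection p) {a : A} (hap : Commute a p) {r : ℝ}
    (hr : 0 ≤ r) (h : r • p ≤ a * p) (k : ℕ) : r ^ k • p ≤ a ^ k * p := by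
  have hpow := Commute.pow_le_pow_left (smul_nonneg hr hp.nonneg) h
    ((hap.mul_left (Commute.refl p)).smul_right r) k
  have := hp.mul_le_mul_right_of_commute hpow (((Commute.refl p).smul_left r).pow_left k)
    ((hap.mul_left (Commute.refl p)).pow_left k)
  rwa [smul_pow, smul_mul_assoc, ← pow_succ, hp.pow_succ_eq,
    hap.mul_pow_mul_of_isIdempotentElem hp.isIdempotentElem] at this

theorem pow_two_mul_mul_le_smul (hp : IsStarProjection p) {a : A} (ha : IsSelfAdjoint a)
    (hap : Commute a p) {r : ℝ} (hr : ‖a‖ ≤ r) (k : ℕ) : a ^ (2 * k) * p ≤ r ^ (2 * k) • p := by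
  have := hp.mul_le_mul_right_of_commute (ha.pow_two_mul_le_algebraMap hr k) (hap.pow_left _)
    (Algebra.commutes _ _)
  rwa [Algebra.algebraMap_eq_smul_one, smul_mul_assoc, one_mul] at this

theorem smul_le_pow_two_mul (hp : IsStarProjection p) {a : A} (ha : IsSelfAdjoint a)
    (hap : Commute a p) {r : ℝ} (hr : 0 ≤ r) (h : r • p ≤ a * p) (k : ℕ) :
    r ^ (2 * k) • p ≤ a ^ (2 * k) := by
  have hsq : 0 ≤ a ^ (2 * k) := by rw [pow_mul', sq]; exact (ha.pow k).mul_self_nonneg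
  calc r ^ (2 * k) • p ≤ a ^ (2 * k) * p := hp.smul_pow_le_pow_mul hap hr h (2 * k)
    _ ≤ a ^ (2 * k) * p + a ^ (2 * k) * (1 - p) := le_add_of_nonneg_right <|
        Commute.mul_nonneg hsq hp.one_sub.nonneg (((Commute.one_right a).sub_right hap).pow_left _)
    _ = a ^ (2 * k) := by rw [← mul_add, add_sub_cancel, mul_one]

theorem pow_two_mul_le_add_smul (hp : IsStarProjection p) {a : A} (ha : IsSelfAdjoint a)
    (hap : Commute a p) (ha₁ : ‖a‖ ≤ 1) {s : ℝ} (hs : ‖(1 - p) * a * (1 - p)‖ ≤ s) (k : ℕ) :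
    a ^ (2 * k) ≤ p + s ^ (2 * k) • (1 - p) := by
  have hq := hp.one_sub
  have haq : Commute a (1 - p) := (Commute.one_right a).sub_right hap
  rw [← haq.eq, mul_assoc, hq.isIdempotentElem.eq] at hs
  have hcompl := hq.pow_two_mul_mul_le_smul ((ha.commute_iff hq.isSelfAdjoint).mp haq)
    (haq.mul_left (Commute.refl _)) hs k
  rw [haq.mul_pow_mul_of_isIdempotentElem hq.isIdempotentElem] at hcompl
  calc a ^ (2 * k) = a ^ (2 * k) * p + a ^ (2 * k) * (1 - p) := by
        rw [← mul_add, add_sub_cancel, mul_one]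
    _ ≤ p + s ^ (2 * k) • (1 - p) :=
        add_le_add (by simpa using hp.pow_two_mul_mul_le_smul ha hap ha₁ k) hcompl

end IsStarProjection

end CStarAlgebra

theorem Matrix.re_trace_le_re_trace_s19 {n : Type*} [Fintype n] [DecidableEq n]
    {A B : Matrix n n ℂ} (h : A ≤ B) : A.trace.re ≤ B.trace.re :=
  (Complex.le_def.mp ((Matrix.tracePositiveLinearMap n ℂ ℂ).mono h)).1

theorem stmt19_general (D : ℕ)
    (K P : Matrix (Fin D) (Fin D) ℂ)
    (hK : K.IsHermitian) (hKnorm : ‖K‖ ≤ 1)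
    (hPherm : P.IsHermitian) (hPproj : P * P = P)
    (Γ Δ : ℝ) (hΓ : 0 ≤ Γ) (hΔ : 0 ≤ Δ)
    (hcomm : K * P = P * K)
    (hGamma : (K * P - (Real.sqrt Γ : ℂ) • P).PosSemidef)
    (hDelta : ‖(1 - P) * K * (1 - P)‖ ≤ Real.sqrt Δ)
    (n : ℕ) :
    P.trace.re * Γ ^ n ≤ (K ^ (2 * n)).trace.re ∧
      (K ^ (2 * n)).trace.re ≤ P.trace.re + Δ ^ n * ((D : ℝ) - P.trace.re) := by
  have hP : IsStarProjection P := ⟨hPproj, hPherm⟩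
  have hΓP : Real.sqrt Γ • P ≤ K * P := by
    rwa [← sub_nonneg, Matrix.nonneg_iff_posSemidef, ← Complex.coe_smul]
  have lower := Matrix.re_trace_le_re_trace_s19 <|
    hP.smul_le_pow_two_mul hK.isSelfAdjoint hcomm (Real.sqrt_nonneg Γ) hΓP n
  have upper := Matrix.re_trace_le_re_trace_s19 <|
    hP.pow_two_mul_le_add_smul hK.isSelfAdjoint hcomm hKnorm hDelta n
  rw [pow_mul (Real.sqrt Γ), Real.sq_sqrt hΓ, Matrix.trace_smul, Complex.smul_re] at lower
  rw [pow_mul (Real.sqrt Δ), Real.sq_sqrt hΔ, Matrix.trace_add, Matrix.trace_smul,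
    Complex.add_re, Complex.smul_re, Matrix.trace_sub, Matrix.trace_one] at upper
  constructor
  · simpa [mul_comm] using lower
  · simpa using upper

/-- Two-sided trace bounds on powers of an AGSP: `N·Γⁿ ≤ tr(K^{2n}) ≤ N + Δⁿ·(D - N)`. -/
theorem stmt19 (D : ℕ) (hD : 1 ≤ D)
    (K P : Matrix (Fin D) (Fin D) ℂ)
    (hK : K.IsHermitian) (hKnorm : ‖K‖ ≤ 1)
    (hPherm : P.IsHermitian) (hPproj : P * P = P)
    (Γ Δ : ℝ) (hΓ : 0 ≤ Γ) (hΔ : 0 ≤ Δ)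
    (hcomm : K * P = P * K)
    (hGamma : (K * P - (Real.sqrt Γ : ℂ) • P).PosSemidef)
    (hDelta : ‖(1 - P) * K * (1 - P)‖ ≤ Real.sqrt Δ)
    (n : ℕ) :
    P.trace.re * Γ ^ n ≤ (K ^ (2 * n)).trace.re ∧
      (K ^ (2 * n)).trace.re ≤ P.trace.re + Δ ^ n * ((D : ℝ) - P.trace.re) :=
  stmt19_general D K P hK hKnorm hPherm hPproj Γ Δ hΓ hΔ hcomm hGamma hDelta n
end
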